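/- arXiv:math/0307065 — 6 statements merged into one kernel-verified Lean document; each statement's English description precedes it below -/
import Mathlib

section
/- Every free group satisfies property NINF: if F is a free group (for instance FreeGroup (Fin n) for any n) and K is a normal subgroup of F which is nontrivial and of infinite index in F, then K is not finitely generated. -/
set_option linter.unusedSectionVars false

open List

namespace NINFAux

variable {α : Type*} [DecidableEq α]

/-- The "no cancellation" relation on adjacent letters of a word. -/
def Rnc (a b : α × Bool) : Prop := b ≠ (a.1, !a.2)

theorem cancel_iff {a b : α × Bool} : (a.1 = b.1 ∧ a.2 = !b.2) ↔ b = (a.1, !a.2) := by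
  obtain ⟨a1, a2⟩ := a; obtain ⟨b1, b2⟩ := b
  simp only [Prod.mk.injEq]
  constructor
  · rintro ⟨h1, h2⟩; subst h1; cases a2 <;> cases b2 <;> simp_all
  · rintro ⟨h1, h2⟩; subst h1; cases a2 <;> cases b2 <;> simp_all

theorem reduce_eq_self_of_chain' {L : List (α × Bool)} (h : L.Chain' Rnc) :
    FreeGroup.reduce L = L := by
  induction L with
  | nil => rfl
  | cons hd tl ih =>
    have htl : tl.Chain' Rnc := h.tail
    rw [FreeGroup.reduce.cons, ih htl]
    cases tl with
    | nil => rfl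
    | cons hd2 tl2 =>
      have hr : Rnc hd hd2 := (List.isChain_cons_cons.mp h).1
      have : ¬(hd.1 = hd2.1 ∧ hd.2 = !hd2.2) := fun hc => hr (cancel_iff.mp hc)
      simp only [this, if_false]

theorem chain'_of_not_pair {L : List (α × Bool)}
    (h : ∀ (L₁ L₂ : List (α × Bool)) (x : α) (b : Bool), L ≠ L₁ ++ (x, b) :: (x, !b) :: L₂) :
    L.Chain' Rnc := by
  induction L with
  | nil => exact List.isChain_nil
  | cons hd tl ih =>
    cases tl with
    | nil => exact List.isChain_singleton _
    | cons hd2 tl2 =>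
      refine List.isChain_cons_cons.mpr ⟨?_, ih ?_⟩
      · intro hc
        exact h [] tl2 hd.1 hd.2 (by rw [hc]; rfl)
      · intro L₁ L₂ x b hEq
        exact h (hd :: L₁) L₂ x b (by rw [hEq]; rfl)

theorem chain'_reduce (L : List (α × Bool)) : (FreeGroup.reduce L).Chain' Rnc :=
  chain'_of_not_pair fun _ _ _ _ hEq => (FreeGroup.reduce.not (by rw [hEq]) : False).elim

theorem chain'_toWord (x : FreeGroup α) : x.toWord.Chain' Rnc := by
  rw [← FreeGroup.reduce_toWord]; exact chain'_reduce _

theorem toWord_mk_of_chain' {L : List (α × Bool)} (h : L.Chain' Rnc) :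
    (FreeGroup.mk L).toWord = L := by
  rw [FreeGroup.toWord_mk, reduce_eq_self_of_chain' h]

theorem chain'_invRev {L : List (α × Bool)} (h : L.Chain' Rnc) :
    (FreeGroup.invRev L).Chain' Rnc := by
  unfold FreeGroup.invRev List.Chain'
  rw [List.isChain_reverse, List.isChain_map]
  refine h.imp ?_
  intro a b hr hc
  apply hr
  obtain ⟨a1, a2⟩ := a; obtain ⟨b1, b2⟩ := b
  simp only [Rnc, Prod.mk.injEq] at hc ⊢
  cases a2 <;> cases b2 <;> simp_all

theorem invRev_singleton (x : α × Bool) : FreeGroup.invRev [x] = [(x.1, !x.2)] := by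
  simp [FreeGroup.invRev]

theorem inv_mk_singleton (x : α × Bool) :
    (FreeGroup.mk [x])⁻¹ = FreeGroup.mk [(x.1, !x.2)] := by
  rw [FreeGroup.inv_mk, invRev_singleton]

theorem mk_cancel (A B : List (α × Bool)) (x : α) (b : Bool) :
    FreeGroup.mk (A ++ (x, b) :: (x, !b) :: B) = FreeGroup.mk (A ++ B) := by
  have h1 : (x, b) :: (x, !b) :: B = [(x, b)] ++ [(x, !b)] ++ B := rfl
  rw [← FreeGroup.mul_mk, h1, ← FreeGroup.mul_mk, ← FreeGroup.mul_mk]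
  have h2 : (FreeGroup.mk [(x, b)] : FreeGroup α) * FreeGroup.mk [(x, !b)] = 1 := by
    rw [← inv_mk_singleton (x, b)]; exact mul_inv_cancel _
  rw [mul_assoc (FreeGroup.mk [(x,b)]), ← mul_assoc (FreeGroup.mk [(x,b)]) (FreeGroup.mk [(x,!b)]),
    h2, one_mul, FreeGroup.mul_mk]

theorem toWord_length_mul_le (x y : FreeGroup α) :
    (x * y).toWord.length ≤ x.toWord.length + y.toWord.length := by
  have := (FreeGroup.toWord_mul_sublist x y).length_le
  simpa using this

theorem toWord_length_inv (x : FreeGroup α) : x⁻¹.toWord.length = x.toWord.length := by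
  rw [FreeGroup.toWord_inv, FreeGroup.invRev_length]

theorem toWord_mk_length_le (L : List (α × Bool)) :
    (FreeGroup.mk L).toWord.length ≤ L.length := by
  rw [FreeGroup.toWord_mk]
  exact (FreeGroup.Red.sublist (FreeGroup.reduce.red)).length_le

section Dist

variable (K : Subgroup (FreeGroup α))

/-- Distance of a coset from the base point, i.e. minimal reduced-word length of a
representative. -/
noncomputable def dK (q : FreeGroup α ⧸ K) : ℕ :=
  sInf ((fun x : FreeGroup α => x.toWord.length) '' {x | (x : FreeGroup α ⧸ K) = q})

theorem dK_le {q : FreeGroup α ⧸ K} {x : FreeGroup α} (h : (x : FreeGroup α ⧸ K) = q) :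
    dK K q ≤ x.toWord.length :=
  Nat.sInf_le ⟨x, h, rfl⟩

theorem exists_geodesic (q : FreeGroup α ⧸ K) :
    ∃ x : FreeGroup α, (x : FreeGroup α ⧸ K) = q ∧ x.toWord.length = dK K q := by
  obtain ⟨y, hy⟩ := QuotientGroup.mk_surjective (s := K) q
  have hne : ((fun x : FreeGroup α => x.toWord.length) '' {x | (x : FreeGroup α ⧸ K) = q}).Nonempty :=
    ⟨y.toWord.length, y, hy, rfl⟩
  obtain ⟨x, hx, hlen⟩ := Nat.sInf_mem hne
  exact ⟨x, hx, hlen⟩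

variable {K} (hn : K.Normal)
include hn

/-- Multiplying in the middle by an element of `K` does not change the coset. -/
theorem qeq (u : FreeGroup α) (hu : u ∈ K) (g z : FreeGroup α) :
    ((g * u * z : FreeGroup α) : FreeGroup α ⧸ K) = (g * z : FreeGroup α) := by
  rw [QuotientGroup.eq]
  have : (g * u * z)⁻¹ * (g * z) = z⁻¹ * u⁻¹ * (z⁻¹)⁻¹ := by group
  rw [this]
  exact hn.conj_mem _ (inv_mem hu) _

theorem qeq_left (u : FreeGroup α) (hu : u ∈ K) (z : FreeGroup α) :
    ((u * z : FreeGroup α) : FreeGroup α ⧸ K) = (z : FreeGroup α ⧸ K) := by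
  have := qeq hn u hu 1 z
  simpa using this

/-- Reverse triangle inequality for `dK`. -/
theorem dK_triangle (g s : FreeGroup α) :
    dK K (g : FreeGroup α ⧸ K) ≤ dK K ((g * s : FreeGroup α) : FreeGroup α ⧸ K) + s.toWord.length := by
  obtain ⟨x, hx, hlen⟩ := exists_geodesic K ((g * s : FreeGroup α) : FreeGroup α ⧸ K)
  have hxg : ((x * s⁻¹ : FreeGroup α) : FreeGroup α ⧸ K) = (g : FreeGroup α ⧸ K) := by
    rw [QuotientGroup.eq] at hx ⊢
    have h2 : (x * s⁻¹)⁻¹ * g = s * (x⁻¹ * (g * s)) * s⁻¹ := by group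
    rw [h2]
    exact hn.conj_mem _ hx _
  calc dK K (g : FreeGroup α ⧸ K) ≤ (x * s⁻¹).toWord.length := dK_le K hxg
    _ ≤ x.toWord.length + s⁻¹.toWord.length := toWord_length_mul_le _ _
    _ = dK K ((g * s : FreeGroup α) : FreeGroup α ⧸ K) + s.toWord.length := by
        rw [hlen, toWord_length_inv]

end Dist

section LemmaA

variable {K : Subgroup (FreeGroup α)} (hn : K.Normal)

theorem mk_join_map_toWord : ∀ l : List (FreeGroup α),
    FreeGroup.mk ((l.map FreeGroup.toWord).flatten) = l.prod := by
  intro l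
  induction l with
  | nil => simp [← FreeGroup.one_eq_mk]
  | cons y l ih =>
    simp only [List.map_cons, List.flatten_cons, List.prod_cons, ← FreeGroup.mul_mk, ih,
      FreeGroup.mk_toWord]

theorem step_prefix {W W' : List (α × Bool)} (h : FreeGroup.Red.Step W W') (n : ℕ) :
    ∃ m, FreeGroup.mk (W'.take n) = FreeGroup.mk (W.take m) := by
  cases h with
  | @not L₁ L₂ x b =>
    by_cases hn : n ≤ L₁.length
    · exact ⟨n, by rw [List.take_append_of_le_length hn, List.take_append_of_le_length hn]⟩
    · push_neg at hn
      refine ⟨L₁.length + (2 + (n - L₁.length)), ?_⟩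
      have h1 : (L₁ ++ L₂).take n = L₁ ++ L₂.take (n - L₁.length) := by
        conv_lhs => rw [show n = L₁.length + (n - L₁.length) by omega]
        exact List.take_length_add_append _
      have h2 : (L₁ ++ (x, b) :: (x, !b) :: L₂).take (L₁.length + (2 + (n - L₁.length)))
          = L₁ ++ (x, b) :: (x, !b) :: L₂.take (n - L₁.length) := by
        rw [List.take_length_add_append,
          show 2 + (n - L₁.length) = (n - L₁.length) + 1 + 1 by omega,
          List.take_succ_cons, List.take_succ_cons]
      rw [h1, h2, mk_cancel]

theorem red_prefix {W W' : List (α × Bool)} (h : FreeGroup.Red W W') (n : ℕ) :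
    ∃ m, FreeGroup.mk (W'.take n) = FreeGroup.mk (W.take m) := by
  induction h generalizing n with
  | refl => exact ⟨n, rfl⟩
  | tail _ hstep ih =>
    obtain ⟨m₀, hm₀⟩ := step_prefix hstep n
    obtain ⟨m, hm⟩ := ih m₀
    exact ⟨m, by rw [hm₀, hm]⟩

include hn in
theorem lemmaA_aux {R : ℕ} : ∀ l : List (FreeGroup α), (∀ y ∈ l, y ∈ K) →
    (∀ y ∈ l, y.toWord.length ≤ R) → ∀ m : ℕ,
    dK K ((FreeGroup.mk (((l.map FreeGroup.toWord).flatten).take m) : FreeGroup α) : FreeGroup α ⧸ K) ≤ R := by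
  intro l
  induction l with
  | nil =>
    intro _ _ m
    simp only [List.map_nil, List.flatten_nil, List.take_nil, ← FreeGroup.one_eq_mk]
    calc dK K ((1 : FreeGroup α) : FreeGroup α ⧸ K) ≤ (1 : FreeGroup α).toWord.length :=
          dK_le K rfl
      _ ≤ R := by simp [FreeGroup.toWord_one]
  | cons y l ih =>
    intro hK hR m
    simp only [List.map_cons, List.flatten_cons]
    by_cases hm : m ≤ y.toWord.length
    · rw [List.take_append_of_le_length hm]
      calc dK K _ ≤ (FreeGroup.mk (y.toWord.take m)).toWord.length := dK_le K rfl
        _ ≤ (y.toWord.take m).length := toWord_mk_length_le _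
        _ ≤ y.toWord.length := by simp
        _ ≤ R := hR y List.mem_cons_self
    · push_neg at hm
      have h1 : m = y.toWord.length + (m - y.toWord.length) := by omega
      rw [h1, List.take_length_add_append]
      rw [← FreeGroup.mul_mk, FreeGroup.mk_toWord]
      rw [qeq_left hn y (hK y List.mem_cons_self)]
      exact ih (fun z hz => hK z (List.mem_cons_of_mem _ hz))
        (fun z hz => hR z (List.mem_cons_of_mem _ hz)) _

include hn in
/-- Lemma A : every vertex visited by the reduced word of an element of `K`, read from the
base vertex, is within distance `R` of the base vertex. -/
theorem lemmaA {S : Finset (FreeGroup α)} (hS : Subgroup.closure (S : Set (FreeGroup α)) = K)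
    {R : ℕ} (hR : ∀ s ∈ S, s.toWord.length ≤ R) {v : FreeGroup α} (hv : v ∈ K) (n : ℕ) :
    dK K ((FreeGroup.mk (v.toWord.take n) : FreeGroup α) : FreeGroup α ⧸ K) ≤ R := by
  have hv' : v ∈ Submonoid.closure ((S : Set (FreeGroup α)) ∪ (S : Set (FreeGroup α))⁻¹) := by
    rw [← Subgroup.closure_toSubmonoid, hS]; exact hv
  obtain ⟨l, hl, hprod⟩ := Submonoid.exists_list_of_mem_closure hv'
  have hlK : ∀ y ∈ l, y ∈ K := by
    intro y hy
    rcases hl y hy with h | h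
    · rw [← hS]; exact Subgroup.subset_closure h
    · rw [← hS]
      rw [Set.mem_inv] at h
      have := Subgroup.subset_closure (k := (S : Set (FreeGroup α))) h
      simpa using inv_mem this
  have hlR : ∀ y ∈ l, y.toWord.length ≤ R := by
    intro y hy
    rcases hl y hy with h | h
    · exact hR y h
    · rw [Set.mem_inv] at h
      have := hR _ h
      rwa [toWord_length_inv] at this
  have hW : FreeGroup.mk ((l.map FreeGroup.toWord).flatten) = v := by rw [mk_join_map_toWord, hprod]
  have hred : FreeGroup.Red ((l.map FreeGroup.toWord).flatten) v.toWord := by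
    rw [← hW, FreeGroup.toWord_mk]; exact FreeGroup.reduce.red
  obtain ⟨m, hm⟩ := red_prefix hred n
  rw [hm]
  exact lemmaA_aux hn l hlK hlR m
end LemmaA

section LemmaE

variable {K : Subgroup (FreeGroup α)} (hn : K.Normal)

theorem qcongr {a b : FreeGroup α} (h : a = b) :
    ((a : FreeGroup α) : FreeGroup α ⧸ K) = ((b : FreeGroup α) : FreeGroup α ⧸ K) := by rw [h]

theorem getLast?_mem_cons {c : α × Bool} {T : List (α × Bool)} {a : α × Bool}
    (h : a ∈ T.getLast?) : a ∈ (c :: T).getLast? := by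
  cases T with
  | nil => simp at h
  | cons d T' => rw [List.getLast?_cons_cons]; exact h

include hn in
/-- Lemma E: for `u ∈ K` nontrivial and cyclically reduced, some vertex visited by the
reduced word of `g * u * g⁻¹`, read from the base vertex, is (modulo `K`) of the form
`g * (prefix of u)`, hence close to the vertex of `g`. -/
theorem lemmaE : ∀ (N : ℕ) (g u : FreeGroup α), g.toWord.length ≤ N → u ∈ K → u ≠ 1 →
    (∀ a ∈ u.toWord.getLast?, ∀ b ∈ u.toWord.head?, Rnc a b) →
    ∃ n j, j ≤ u.toWord.length ∧
      ((FreeGroup.mk ((g * u * g⁻¹).toWord.take n) : FreeGroup α) : FreeGroup α ⧸ K) =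
      ((g * FreeGroup.mk (u.toWord.take j) : FreeGroup α) : FreeGroup α ⧸ K) := by
  intro N
  induction N with
  | zero =>
    intro g u hg hu hu1 hwrap
    have hgw : g.toWord = [] := List.eq_nil_of_length_eq_zero (Nat.le_zero.mp hg)
    have hg1 : g = 1 := FreeGroup.toWord_eq_nil_iff.mp hgw
    exact ⟨0, 0, Nat.zero_le _, by simp [hg1, ← FreeGroup.one_eq_mk]⟩
  | succ N ih =>
    intro g u hg hu hu1 hwrap
    by_cases hgnil : g.toWord = []
    · have hg1 : g = 1 := FreeGroup.toWord_eq_nil_iff.mp hgnil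
      exact ⟨0, 0, Nat.zero_le _, by simp [hg1, ← FreeGroup.one_eq_mk]⟩
    set σ := g.toWord.getLast hgnil with hσ
    set h := FreeGroup.mk (g.toWord.dropLast) with hhdef
    set x := FreeGroup.mk [σ] with hxdef
    have hchain_g := chain'_toWord g
    have hchain_u := chain'_toWord u
    have hchain_dl : (g.toWord.dropLast).Chain' Rnc := hchain_g.prefix (List.dropLast_prefix _)
    have hhw : h.toWord = g.toWord.dropLast := toWord_mk_of_chain' hchain_dl
    have hhx : g = h * x := by
      rw [hhdef, hxdef, FreeGroup.mul_mk, List.dropLast_append_getLast hgnil, FreeGroup.mk_toWord]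
    have hgx : h = g * x⁻¹ := by rw [hhx]; group
    have hxinv : x⁻¹ = FreeGroup.mk [(σ.1, !σ.2)] := inv_mk_singleton σ
    have hhlen : h.toWord.length ≤ N := by
      rw [hhw, List.length_dropLast]
      have hpos : 0 < g.toWord.length := List.length_pos_iff.mpr hgnil
      omega
    have hunil : u.toWord ≠ [] := fun hc => hu1 (FreeGroup.toWord_eq_nil_iff.mp hc)
    set u' := x * u * x⁻¹ with hu'def
    have hu'K : u' ∈ K := hn.conj_mem u hu x
    have hu'1 : u' ≠ 1 := by
      intro hc
      apply hu1
      have huc : u = x⁻¹ * u' * x := by rw [hu'def]; group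
      rw [huc, hc]; group
    have hhv : h * u' * h⁻¹ = g * u * g⁻¹ := by rw [hu'def, hhx]; group
    by_cases c1 : u.toWord.head? = some (σ.1, !σ.2)
    · -- left cancellation case: u starts with the inverse of σ
      rcases huw : u.toWord with _ | ⟨c, T⟩
      · exact absurd huw hunil
      have hc : c = (σ.1, !σ.2) := by rw [huw] at c1; simpa using c1
      subst hc
      have hu_eq : u = FreeGroup.mk ((σ.1, !σ.2) :: T) := by
        conv_lhs => rw [← FreeGroup.mk_toWord (x := u)]
        rw [huw]
      have hxu : x * u = FreeGroup.mk T := by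
        rw [hxdef, hu_eq, FreeGroup.mul_mk]
        calc FreeGroup.mk ([σ] ++ (σ.1, !σ.2) :: T)
            = FreeGroup.mk ([] ++ (σ.1, σ.2) :: (σ.1, !σ.2) :: T) := rfl
          _ = FreeGroup.mk ([] ++ T) := mk_cancel [] T σ.1 σ.2
          _ = FreeGroup.mk T := rfl
      have hu'mk : u' = FreeGroup.mk (T ++ [(σ.1, !σ.2)]) := by
        rw [hu'def, show x * u * x⁻¹ = (x * u) * x⁻¹ from rfl, hxu, hxinv, FreeGroup.mul_mk]
      have hchain_u2 : ((σ.1, !σ.2) :: T).Chain' Rnc := by rw [huw] at hchain_u; exact hchain_u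
      have hchain_u' : (T ++ [(σ.1, !σ.2)]).Chain' Rnc := by
        unfold List.Chain'; rw [List.isChain_append]
        refine ⟨hchain_u2.tail, List.isChain_singleton _, ?_⟩
        intro a ha b hb
        simp only [List.head?_cons, Option.mem_def, Option.some.injEq] at hb
        subst hb
        exact hwrap a (by rw [huw]; exact getLast?_mem_cons ha) _ (by rw [huw]; simp)
      have hu'w : u'.toWord = T ++ [(σ.1, !σ.2)] := by
        rw [hu'mk]; exact toWord_mk_of_chain' hchain_u'
      have hwrap' : ∀ a ∈ u'.toWord.getLast?, ∀ b ∈ u'.toWord.head?, Rnc a b := by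
        rw [hu'w]
        intro a ha b hb
        rw [List.getLast?_concat] at ha
        simp only [Option.mem_def, Option.some.injEq] at ha
        subst ha
        cases T with
        | nil =>
          simp only [List.nil_append, List.head?_cons, Option.mem_def, Option.some.injEq] at hb
          subst hb
          simp [Rnc, Prod.ext_iff]
        | cons d T' =>
          simp only [List.cons_append, List.head?_cons, Option.mem_def, Option.some.injEq] at hb
          subst hb
          exact (List.isChain_cons_cons.mp hchain_u2).1
      obtain ⟨n, j', hj', heq⟩ := ih h u' hhlen hu'K hu'1 hwrap'
      rw [hhv] at heq
      by_cases hj : j' = u'.toWord.length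
      · rw [hj, List.take_length, FreeGroup.mk_toWord] at heq
        have h2 : ((h * u' : FreeGroup α) : FreeGroup α ⧸ K) = (h : FreeGroup α ⧸ K) := by
          have := qeq hn u' hu'K h 1; simpa using this
        refine ⟨n, 1, by simp, ?_⟩
        rw [heq, h2]
        exact qcongr (by rw [show ((σ.1, !σ.2) :: T).take 1 = [(σ.1, !σ.2)] from rfl, ← hxinv, hgx])
      · have hlen' : u'.toWord.length = T.length + 1 := by rw [hu'w]; simp
        have hjT : j' ≤ T.length := by omega
        rw [hu'w, List.take_append_of_le_length hjT] at heq
        refine ⟨n, j' + 1, by simp only [List.length_cons]; omega, ?_⟩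
        rw [heq, List.take_succ_cons]
        refine qcongr ?_
        rw [show ((σ.1, !σ.2) :: T.take j') = [(σ.1, !σ.2)] ++ T.take j' from rfl,
          ← FreeGroup.mul_mk, ← hxinv, hhx]
        group
    · by_cases c2 : u.toWord.getLast? = some σ
      · -- right cancellation case: u ends with σ
        have hgl : u.toWord.getLast hunil = σ := by
          rw [List.getLast?_eq_getLast hunil] at c2; simpa using c2
        have hT : u.toWord.dropLast ++ [σ] = u.toWord := by
          conv_rhs => rw [← List.dropLast_append_getLast hunil]
          rw [hgl]
        set T' := u.toWord.dropLast with hT'def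
        have hu_eq : u = FreeGroup.mk (T' ++ [σ]) := by
          conv_lhs => rw [← FreeGroup.mk_toWord (x := u)]
          rw [← hT]
        have hux : u * x⁻¹ = FreeGroup.mk T' := by
          rw [hu_eq, hxinv, FreeGroup.mul_mk]
          calc FreeGroup.mk ((T' ++ [σ]) ++ [(σ.1, !σ.2)])
              = FreeGroup.mk (T' ++ (σ.1, σ.2) :: (σ.1, !σ.2) :: []) := by
                rw [List.append_assoc]; rfl
            _ = FreeGroup.mk (T' ++ []) := mk_cancel T' [] σ.1 σ.2
            _ = FreeGroup.mk T' := by rw [List.append_nil]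
        have hu'mk : u' = FreeGroup.mk (σ :: T') := by
          rw [hu'def, mul_assoc, hux, hxdef, FreeGroup.mul_mk]; rfl
        have hchain_T' : T'.Chain' Rnc := hchain_u.prefix (List.dropLast_prefix _)
        have hch2 : (T' ++ [σ]).Chain' Rnc := by rw [hT]; exact hchain_u
        have hchain_u' : (σ :: T').Chain' Rnc := by
          cases hT'c : T' with
          | nil => exact List.isChain_singleton _
          | cons d T'' =>
            refine List.isChain_cons_cons.mpr ⟨?_, hT'c ▸ hchain_T'⟩
            have hd : u.toWord.head? = some d := by
              rw [← hT, hT'c]; simp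
            intro hcontra
            exact c1 (by rw [hd, hcontra])
        have hu'w : u'.toWord = σ :: T' := by rw [hu'mk]; exact toWord_mk_of_chain' hchain_u'
        have hwrap' : ∀ a ∈ u'.toWord.getLast?, ∀ b ∈ u'.toWord.head?, Rnc a b := by
          rw [hu'w]
          intro a ha b hb
          simp only [List.head?_cons, Option.mem_def, Option.some.injEq] at hb
          subst hb
          cases hT'c : T' with
          | nil =>
            rw [hT'c] at ha
            simp only [Option.mem_def, List.getLast?_singleton, Option.some.injEq] at ha
            subst ha
            simp [Rnc, Prod.ext_iff]
          | cons d T'' =>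
            rw [hT'c, List.getLast?_cons_cons] at ha
            have hjunc := (List.isChain_append.mp hch2).2.2
            exact hjunc a (by rw [hT'c]; exact ha) σ (by simp)
        obtain ⟨n, j', hj', heq⟩ := ih h u' hhlen hu'K hu'1 hwrap'
        rw [hhv] at heq
        by_cases hj0 : j' = 0
        · rw [hj0] at heq
          simp only [List.take_zero, ← FreeGroup.one_eq_mk, mul_one] at heq
          refine ⟨n, T'.length,
            by rw [← hT]; simp only [List.length_append, List.length_cons, List.length_nil]; omega,
            ?_⟩
          rw [heq]
          have hstep : (h : FreeGroup α ⧸ K) = ((g * (u * x⁻¹) : FreeGroup α) : FreeGroup α ⧸ K) := by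
            have hq := qeq hn u hu g x⁻¹
            rw [← mul_assoc]
            rw [hq]
            exact qcongr hgx
          rw [hstep]
          refine qcongr ?_
          rw [hux, ← hT, List.take_left]
        · have hj1 : 1 ≤ j' := Nat.one_le_iff_ne_zero.mpr hj0
          have hlen' : u'.toWord.length = T'.length + 1 := by rw [hu'w]; simp
          have hjT : j' - 1 ≤ T'.length := by omega
          rw [hu'w, show j' = (j' - 1) + 1 by omega, List.take_succ_cons] at heq
          refine ⟨n, j' - 1, ?_, ?_⟩
          · conv_rhs => rw [← hT]
            simp only [List.length_append, List.length_cons, List.length_nil]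
            omega
          · rw [heq]
            conv_rhs => rw [← hT]
            rw [List.take_append_of_le_length hjT]
            refine qcongr ?_
            rw [show (σ :: T'.take (j' - 1)) = [σ] ++ T'.take (j' - 1) from rfl,
              ← FreeGroup.mul_mk, ← hxdef, hhx]
            group
      · -- no cancellation: base case
        have hinvg : g⁻¹ = FreeGroup.mk (FreeGroup.invRev g.toWord) := by
          conv_lhs => rw [← FreeGroup.mk_toWord (x := g)]
          rw [FreeGroup.inv_mk]
        have hbigmk : g * u * g⁻¹ =
            FreeGroup.mk (g.toWord ++ u.toWord ++ FreeGroup.invRev g.toWord) := by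
          rw [← FreeGroup.mul_mk, ← FreeGroup.mul_mk, FreeGroup.mk_toWord, FreeGroup.mk_toWord,
            ← hinvg]
        have hgl : g.toWord.getLast? = some σ := List.getLast?_eq_getLast hgnil
        have hinvhead : (FreeGroup.invRev g.toWord).head? = some (σ.1, !σ.2) := by
          unfold FreeGroup.invRev
          rw [List.head?_reverse, List.getLast?_map, hgl]
          rfl
        have chain_big : (g.toWord ++ u.toWord ++ FreeGroup.invRev g.toWord).Chain' Rnc := by
          unfold List.Chain'; rw [List.isChain_append, List.isChain_append]
          refine ⟨⟨hchain_g, hchain_u, ?_⟩, chain'_invRev hchain_g, ?_⟩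
          · intro a ha b hb
            rw [hgl] at ha
            simp only [Option.mem_def, Option.some.injEq] at ha
            subst ha
            intro hcontra
            rw [Option.mem_def, hcontra] at hb
            exact c1 hb
          · intro a ha b hb
            rw [hinvhead] at hb
            simp only [Option.mem_def, Option.some.injEq] at hb
            subst hb
            intro hcontra
            have h1 : σ.1 = a.1 ∧ σ.2 = a.2 := by
              have := Prod.ext_iff.mp hcontra
              simpa using this
            have haσ : a = σ := Prod.ext_iff.mpr ⟨h1.1.symm, h1.2.symm⟩
            subst haσ
            rw [List.getLast?_append_of_ne_nil _ hunil] at ha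
            exact c2 ha
        have hvw : (g * u * g⁻¹).toWord = g.toWord ++ u.toWord ++ FreeGroup.invRev g.toWord := by
          rw [hbigmk]; exact toWord_mk_of_chain' chain_big
        refine ⟨g.toWord.length, 0, Nat.zero_le _, ?_⟩
        rw [hvw, List.append_assoc, List.take_left, FreeGroup.mk_toWord]
        exact qcongr (by simp [← FreeGroup.one_eq_mk])

end LemmaE

section Main

variable {K : Subgroup (FreeGroup α)}

/-- Letters occurring in reduced words of elements of the closure of `S` occur in
elements of `S`. -/
theorem support_lemma {S : Finset (FreeGroup α)} {x : FreeGroup α}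
    (hx : x ∈ Subgroup.closure (S : Set (FreeGroup α))) :
    ∀ p ∈ x.toWord, p.1 ∈ S.biUnion (fun s => (s.toWord.map Prod.fst).toFinset) := by
  induction hx using Subgroup.closure_induction with
  | mem s hs =>
    intro p hp
    exact Finset.mem_biUnion.mpr ⟨s, hs, List.mem_toFinset.mpr (List.mem_map_of_mem hp)⟩
  | one => intro p hp; rw [FreeGroup.toWord_one] at hp; simp at hp
  | mul a b ha hb iha ihb =>
    intro p hp
    rcases List.mem_append.mp ((FreeGroup.toWord_mul_sublist a b).subset hp) with h | h
    exacts [iha p h, ihb p h]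
  | inv a ha iha =>
    intro p hp
    rw [FreeGroup.toWord_inv] at hp
    unfold FreeGroup.invRev at hp
    rw [List.mem_reverse] at hp
    obtain ⟨q, hq, hpq⟩ := List.mem_map.mp hp
    have := iha q hq
    rw [← hpq]
    exact this

/-- There is a nontrivial cyclically reduced element in any nontrivial normal subgroup. -/
theorem exists_min_cyclic (hn : K.Normal) (hbot : K ≠ ⊥) :
    ∃ u : FreeGroup α, u ∈ K ∧ u ≠ 1 ∧
      (∀ a ∈ u.toWord.getLast?, ∀ b ∈ u.toWord.head?, Rnc a b) := by
  obtain ⟨⟨u0, hu0K⟩, hu0⟩ := Subgroup.ne_bot_iff_exists_ne_one.mp hbot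
  have hu0' : u0 ≠ 1 := by simpa [Subtype.ext_iff] using hu0
  set TS : Set ℕ := {n | ∃ x : FreeGroup α, x ∈ K ∧ x ≠ 1 ∧ x.toWord.length = n} with hTS
  have hTSne : TS.Nonempty := ⟨_, u0, hu0K, hu0', rfl⟩
  obtain ⟨u, huK, hu1, hul⟩ := Nat.sInf_mem hTSne
  have hmin : ∀ w : FreeGroup α, w ∈ K → w ≠ 1 → u.toWord.length ≤ w.toWord.length := by
    intro w hw hw1; rw [hul]; exact Nat.sInf_le ⟨w, hw, hw1, rfl⟩
  refine ⟨u, huK, hu1, ?_⟩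
  intro a ha b hb hcontra
  have hunil : u.toWord ≠ [] := fun hc => hu1 (FreeGroup.toWord_eq_nil_iff.mp hc)
  rcases huw : u.toWord with _ | ⟨c, T⟩
  · exact hunil huw
  rw [huw] at ha hb
  simp only [List.head?_cons, Option.mem_def, Option.some.injEq] at hb
  subst hb
  cases T with
  | nil =>
    simp only [Option.mem_def, List.getLast?_singleton, Option.some.injEq] at ha
    -- a = b = (a.1, !a.2) : contradiction on the boolean component
    rw [hcontra] at ha
    have : (!a.2) = a.2 := congrArg Prod.snd ha
    simp at this
  | cons d T' =>
    rw [List.getLast?_cons_cons] at ha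
    have hTne : (d :: T') ≠ [] := by simp
    have hglT : (d :: T').getLast hTne = a := by
      rw [List.getLast?_eq_getLast hTne] at ha
      simpa using ha
    have hdecT : (d :: T').dropLast ++ [a] = d :: T' := by
      conv_rhs => rw [← List.dropLast_append_getLast hTne]
      rw [hglT]
    set M := (d :: T').dropLast with hM
    -- u = mk [b] * mk M * mk [a] with b = (a.1, !a.2)
    have humk : u = FreeGroup.mk ([(a.1, !a.2)] ++ M ++ [a]) := by
      conv_lhs => rw [← FreeGroup.mk_toWord (x := u)]
      rw [huw, hcontra, ← hdecT]
      rfl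
    have hbinv : (FreeGroup.mk [(a.1, !a.2)] : FreeGroup α)⁻¹ = FreeGroup.mk [a] := by
      rw [inv_mk_singleton]
      simp
    set w := FreeGroup.mk M with hw
    have hu_conj : u = FreeGroup.mk [(a.1, !a.2)] * w * (FreeGroup.mk [(a.1, !a.2)])⁻¹ := by
      rw [hbinv, humk, hw, ← FreeGroup.mul_mk, ← FreeGroup.mul_mk]
    have hwK : w ∈ K := by
      have : w = (FreeGroup.mk [(a.1, !a.2)])⁻¹ * u * ((FreeGroup.mk [(a.1, !a.2)])⁻¹)⁻¹ := by
        rw [hu_conj]; group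
      rw [this]
      exact hn.conj_mem u huK _
    have hw1 : w ≠ 1 := by
      intro hc
      apply hu1
      rw [hu_conj, hc]
      group
    have hwlen : w.toWord.length ≤ M.length := toWord_mk_length_le M
    have hMlen : M.length = T'.length := by
      rw [hM, List.length_dropLast]
      simp
    have hulen2 : u.toWord.length = T'.length + 2 := by rw [huw]; simp
    have := hmin w hwK hw1
    omega

/-- If all cosets were close to the base point, the quotient would be finite. -/
theorem exists_far (hfa : Finite α) (hinf : Infinite (FreeGroup α ⧸ K)) (N : ℕ) :
    ∃ q : FreeGroup α ⧸ K, N < dK K q := by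
  by_contra hcon
  push_neg at hcon
  have hsub : (Set.univ : Set (FreeGroup α ⧸ K)) ⊆
      (fun x : FreeGroup α => ((x : FreeGroup α) : FreeGroup α ⧸ K)) ''
        {x : FreeGroup α | x.toWord.length ≤ N} := by
    intro q _
    obtain ⟨x, hx, hlen⟩ := exists_geodesic K q
    exact ⟨x, by rw [Set.mem_setOf_eq, hlen]; exact hcon q, hx⟩
  have hfin1 : {x : FreeGroup α | x.toWord.length ≤ N}.Finite := by
    have h2 : {l : List (α × Bool) | l.length ≤ N}.Finite := List.finite_length_le _ _
    exact Set.Finite.preimage (FreeGroup.toWord_injective.injOn) h2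
  have huniv : (Set.univ : Set (FreeGroup α ⧸ K)).Finite := (hfin1.image _).subset hsub
  rw [Set.finite_univ_iff] at huniv
  exact absurd huniv hinf.not_finite

end Main

end NINFAux

/-- A group `G` satisfies property NINF if every normal subgroup of `G` that is
nontrivial and of infinite index is not finitely generated. -/
def NINF (G : Type*) [Group G] : Prop :=
  ∀ K : Subgroup G, K.Normal → K ≠ ⊥ → Infinite (G ⧸ K) → ¬ K.FG

/-- Lemma 3.3: every free group satisfies property NINF: every normal subgroup
which is nontrivial and of infinite index is not finitely generated. -/
theorem freeGroup_NINF (α : Type*) : NINF (FreeGroup α) := by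
  classical
  intro K hn hbot hinf hfg
  obtain ⟨S, hS⟩ := hfg
  obtain ⟨u, huK, hu1, hwrap⟩ := NINFAux.exists_min_cyclic hn hbot
  -- the (finitely many) letters occurring in the generators of K
  set AS := S.biUnion (fun s => (s.toWord.map Prod.fst).toFinset) with hAS
  have hsupp : ∀ x ∈ K, ∀ p ∈ x.toWord, p.1 ∈ AS := by
    intro x hx
    rw [← hS] at hx
    exact NINFAux.support_lemma hx
  have hunil : u.toWord ≠ [] := fun hc => hu1 (FreeGroup.toWord_eq_nil_iff.mp hc)
  -- every letter of α occurs in AS (otherwise conjugating u by it contradicts normality)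
  have hall : ∀ b : α, b ∈ AS := by
    intro b
    by_contra hbA
    have hvK : FreeGroup.of b * u * (FreeGroup.of b)⁻¹ ∈ K := hn.conj_mem u huK _
    have hofb : (FreeGroup.of b : FreeGroup α) = FreeGroup.mk [(b, true)] := rfl
    have hofbinv : (FreeGroup.of b : FreeGroup α)⁻¹ = FreeGroup.mk [(b, false)] := by
      rw [hofb, NINFAux.inv_mk_singleton]; rfl
    have hvmk : FreeGroup.of b * u * (FreeGroup.of b)⁻¹
        = FreeGroup.mk (((b, true) :: u.toWord) ++ [(b, false)]) := by
      conv_lhs => rw [← FreeGroup.mk_toWord (x := u)]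
      rw [hofbinv, hofb, FreeGroup.mul_mk, FreeGroup.mul_mk]; rfl
    have hchain : (((b, true) :: u.toWord) ++ [(b, false)]).Chain' NINFAux.Rnc := by
      unfold List.Chain'; rw [List.isChain_append]
      refine ⟨?_, List.isChain_singleton _, ?_⟩
      · rcases huw : u.toWord with _ | ⟨c, T⟩
        · exact absurd huw hunil
        refine List.isChain_cons_cons.mpr ⟨?_, by rw [← huw]; exact NINFAux.chain'_toWord u⟩
        intro hc
        have hcmem : c ∈ u.toWord := by rw [huw]; exact List.mem_cons_self
        have := hsupp u huK c hcmem
        rw [hc] at this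
        exact hbA this
      · intro p hp q hq
        simp only [List.head?_cons, Option.mem_def, Option.some.injEq] at hq
        subst hq
        rw [show ((b, true) :: u.toWord) = [(b, true)] ++ u.toWord from rfl,
          List.getLast?_append_of_ne_nil _ hunil] at hp
        have hpmem : p ∈ u.toWord := List.mem_of_mem_getLast? hp
        have hpA := hsupp u huK p hpmem
        intro hc
        have hb1 : b = p.1 := congrArg Prod.fst hc
        rw [hb1] at hbA
        exact hbA hpA
    have hvw : (FreeGroup.of b * u * (FreeGroup.of b)⁻¹).toWord
        = ((b, true) :: u.toWord) ++ [(b, false)] := by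
      rw [hvmk]; exact NINFAux.toWord_mk_of_chain' hchain
    have hmem : ((b, true) : α × Bool) ∈ (FreeGroup.of b * u * (FreeGroup.of b)⁻¹).toWord := by
      rw [hvw]; exact List.mem_append_left _ List.mem_cons_self
    exact hbA (hsupp _ hvK _ hmem)
  have hfa : Finite α := Set.finite_univ_iff.mp (AS.finite_toSet.subset (fun b _ => hall b))
  -- bound on the lengths of the generators
  have hRS : ∀ s ∈ S, s.toWord.length ≤ S.sup (fun s => s.toWord.length) :=
    fun s hs => Finset.le_sup (f := fun s : FreeGroup α => s.toWord.length) hs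
  -- a coset far away from the base point
  obtain ⟨q, hq⟩ := NINFAux.exists_far hfa hinf (S.sup (fun s => s.toWord.length) + u.toWord.length)
  obtain ⟨g, hgq, -⟩ := NINFAux.exists_geodesic K q
  obtain ⟨n, j, hj, heq⟩ := NINFAux.lemmaE hn g.toWord.length g u le_rfl huK hu1 hwrap
  have hA : NINFAux.dK K ((FreeGroup.mk ((g * u * g⁻¹).toWord.take n) : FreeGroup α) : FreeGroup α ⧸ K)
      ≤ S.sup (fun s => s.toWord.length) :=
    NINFAux.lemmaA hn hS hRS (hn.conj_mem u huK g) n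
  have htri := NINFAux.dK_triangle hn g (FreeGroup.mk (u.toWord.take j))
  have hlen2 : (FreeGroup.mk (u.toWord.take j) : FreeGroup α).toWord.length ≤ u.toWord.length := by
    refine le_trans (NINFAux.toWord_mk_length_le _) ?_
    rw [List.length_take]
    omega
  rw [heq] at hA
  rw [hgq] at htri
  omega
end

section
/- Let Π be a group acting on an additive abelian group M by additive automorphisms, and assume M is torsion-free as a ℤ-module. Let u ∈ M be a nonzero element fixed by the action (γ·u = u for all γ ∈ Π). Let φ_1, …, φ_b : Π → ℤ be additive-valued group homomorphisms that are ℤ-linearly independent in the ℤ-module of homomorphisms Π → ℤ, and suppose there are elements v_1, …, v_b ∈ M satisfying γ·v_j = v_j + φ_j(γ)·u for all γ ∈ Π and all j = 1,…,b. Then the family u, v_1, …, v_b is ℤ-linearly independent in M. -/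
/-- If `M` is a torsion-free `ℤ[Π]`-module, `u ≠ 0` is a `Π`-invariant element,
`φ₁, …, φ_b : Π → ℤ` are ℤ-linearly independent additive-valued homomorphisms and
`v₁, …, v_b ∈ M` satisfy `γ • v j = v j + φ j γ • u` for all `γ`, then the family
`u, v₁, …, v_b` is ℤ-linearly independent in `M`. -/
theorem linearIndependent_of_bad_monodromy_relations
    {P M : Type*} [Group P] [AddCommGroup M] [DistribMulAction P M]
    (htf : ∀ (n : ℤ) (x : M), n ≠ 0 → n • x = 0 → x = 0)
    (u : M) (hu : u ≠ 0) (hufix : ∀ γ : P, γ • u = u)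
    (b : ℕ) (φ : Fin b → P → ℤ)
    (hφhom : ∀ (j : Fin b) (γ δ : P), φ j (γ * δ) = φ j γ + φ j δ)
    (hφind : ∀ c : Fin b → ℤ, (∀ γ : P, ∑ j, c j * φ j γ = 0) → c = 0)
    (v : Fin b → M)
    (hv : ∀ (j : Fin b) (γ : P), γ • v j = v j + φ j γ • u) :
    LinearIndependent ℤ (Fin.cons u v : Fin (b + 1) → M) := by
  have key : ∀ (n : ℤ), n • u = 0 → n = 0 := by
    intro n hn
    by_contra h
    exact hu (htf n u h hn)
  rw [Fintype.linearIndependent_iff]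
  intro g hg
  rw [Fin.sum_univ_succ] at hg
  simp only [Fin.cons_zero, Fin.cons_succ] at hg
  -- apply γ to the relation
  have hγ : ∀ γ : P, (∑ j, g j.succ * φ j γ) • u = 0 := by
    intro γ
    have h2 : γ • (g 0 • u + ∑ j, g j.succ • v j) = 0 := by rw [hg, smul_zero]
    rw [smul_add, Finset.smul_sum] at h2
    have h3 : ∀ j : Fin b, γ • (g j.succ • v j) = g j.succ • v j + (g j.succ * φ j γ) • u := by
      intro j
      rw [smul_comm, hv, smul_add, mul_smul]
    simp only [h3] at h2
    rw [Finset.sum_add_distrib] at h2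
    have h4 : γ • (g 0 • u) = g 0 • u := by rw [smul_comm, hufix]
    rw [h4] at h2
    have h5 : (g 0 • u + ∑ j, g j.succ • v j) + ∑ j, (g j.succ * φ j γ) • u = 0 := by
      rw [← h2]; abel
    rw [hg, zero_add, ← Finset.sum_smul] at h5
    exact h5
  have hc : (fun j : Fin b => g j.succ) = 0 := by
    apply hφind
    intro γ
    exact key _ (hγ γ)
  have hsum0 : ∀ j : Fin b, g j.succ = 0 := fun j => congrFun hc j
  have hg0 : g 0 = 0 := by
    apply key
    have : ∑ j, g j.succ • v j = 0 := by
      simp [hsum0]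
    rw [this, add_zero] at hg
    exact hg
  intro i
  refine Fin.cases ?_ ?_ i
  · exact hg0
  · exact hsum0
end

section
/- Let g ≥ 2 and n ≥ 1. There exists a surjective group homomorphism from the surface group Π_g onto the free group F_n of rank n if and only if g ≥ n. In particular, the map p : Π_g → F_g determined by p(a_i) = p(b_i) = x_i (where x_1,…,x_g are free generators of F_g) is a well-defined surjective homomorphism. -/
open scoped commutatorElement


/-- The single surface relator `[a₁,b₁]⋯[a_g,b_g]` in the free group on `2g` generators,
where `a i = FreeGroup.of (Sum.inl i)` and `b i = FreeGroup.of (Sum.inr i)`. -/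
def surfaceRelator (g : ℕ) : FreeGroup (Fin g ⊕ Fin g) :=
  ((List.finRange g).map fun i =>
    ⁅(FreeGroup.of (Sum.inl i) : FreeGroup (Fin g ⊕ Fin g)), FreeGroup.of (Sum.inr i)⁆).prod

/-- The surface group `Π_g = ⟨a₁,…,a_g,b₁,…,b_g ∣ [a₁,b₁]⋯[a_g,b_g]⟩` of genus `g`,
realized as a presented group. -/
abbrev SurfaceGroup (g : ℕ) : Type :=
  PresentedGroup ({surfaceRelator g} : Set (FreeGroup (Fin g ⊕ Fin g)))

@[ext] structure Heis : Type where
  a : ℚ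
  b : ℚ
  c : ℚ

namespace Heis

instance : Mul Heis := ⟨fun x y => ⟨x.a + y.a, x.b + y.b, x.c + y.c + x.a * y.b⟩⟩
instance : One Heis := ⟨⟨0, 0, 0⟩⟩
instance : Inv Heis := ⟨fun x => ⟨-x.a, -x.b, -x.c + x.a * x.b⟩⟩

@[simp] lemma mul_a (x y : Heis) : (x * y).a = x.a + y.a := rfl
@[simp] lemma mul_b (x y : Heis) : (x * y).b = x.b + y.b := rfl
@[simp] lemma mul_c (x y : Heis) : (x * y).c = x.c + y.c + x.a * y.b := rfl
@[simp] lemma one_a : (1 : Heis).a = 0 := rfl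
@[simp] lemma one_b : (1 : Heis).b = 0 := rfl
@[simp] lemma one_c : (1 : Heis).c = 0 := rfl
@[simp] lemma inv_a (x : Heis) : (x⁻¹).a = -x.a := rfl
@[simp] lemma inv_b (x : Heis) : (x⁻¹).b = -x.b := rfl
@[simp] lemma inv_c (x : Heis) : (x⁻¹).c = -x.c + x.a * x.b := rfl

instance : Group Heis where
  mul_assoc x y z := by ext <;> simp <;> ring
  one_mul x := by ext <;> simp
  mul_one x := by ext <;> simp
  inv_mul_cancel x := by ext <;> simp <;> ring

lemma commutator_eq (x y : Heis) :
    ⁅x, y⁆ = ⟨0, 0, x.a * y.b - y.a * x.b⟩ := by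
  ext <;> simp [commutatorElement_def] <;> ring

lemma prod_central (l : List ℚ) :
    (l.map fun t => (⟨0, 0, t⟩ : Heis)).prod = ⟨0, 0, l.sum⟩ := by
  induction l with
  | nil => rfl
  | cons h t ih => ext <;> simp [ih]

/-- First projection as hom to `Multiplicative ℚ`. -/
def pa : Heis →* Multiplicative ℚ where
  toFun x := Multiplicative.ofAdd x.a
  map_one' := rfl
  map_mul' x y := rfl

def pb : Heis →* Multiplicative ℚ where
  toFun x := Multiplicative.ofAdd x.b
  map_one' := rfl
  map_mul' x y := rfl

end Heis

lemma hom_surfaceRelator {g : ℕ} (Φ : FreeGroup (Fin g ⊕ Fin g) →* Heis) :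
    Φ (surfaceRelator g) =
      ⟨0, 0, ∑ i : Fin g,
        ((Φ (FreeGroup.of (Sum.inl i))).a * (Φ (FreeGroup.of (Sum.inr i))).b -
         (Φ (FreeGroup.of (Sum.inr i))).a * (Φ (FreeGroup.of (Sum.inl i))).b)⟩ := by
  unfold surfaceRelator
  rw [map_list_prod, List.map_map]
  have h1 : (Φ ∘ fun i : Fin g =>
      ⁅(FreeGroup.of (Sum.inl i) : FreeGroup (Fin g ⊕ Fin g)), FreeGroup.of (Sum.inr i)⁆) =
      (fun t => (⟨0, 0, t⟩ : Heis)) ∘ (fun i : Fin g =>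
        ((Φ (FreeGroup.of (Sum.inl i))).a * (Φ (FreeGroup.of (Sum.inr i))).b -
         (Φ (FreeGroup.of (Sum.inr i))).a * (Φ (FreeGroup.of (Sum.inl i))).b)) := by
    funext i
    simp [map_commutatorElement, Heis.commutator_eq]
  rw [h1, ← List.map_map, Heis.prod_central, Fin.sum_univ_def]

/-- exponent-sum decomposition for homs to `Multiplicative ℚ` -/
lemma expsum {β : Type*} [Fintype β] [DecidableEq β]
    (ψ : FreeGroup β →* Multiplicative ℚ) (w : FreeGroup β) :
    Multiplicative.toAdd (ψ w) =
      ∑ s : β, Multiplicative.toAdd (ψ (FreeGroup.of s)) *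
        Multiplicative.toAdd
          ((FreeGroup.lift fun t => Multiplicative.ofAdd (if t = s then (1 : ℚ) else 0)) w) := by
  have hpure : ∀ u : β, (pure u : FreeGroup β) = FreeGroup.of u := fun _ => rfl
  induction w using FreeGroup.induction_on with
  | C1 => simp
  | of t =>
    have h : ∀ s : β, (FreeGroup.lift fun t => Multiplicative.ofAdd
        (if t = s then (1 : ℚ) else 0)) (FreeGroup.of t) =
        Multiplicative.ofAdd (if t = s then (1 : ℚ) else 0) := fun s => FreeGroup.lift_apply_of
    simp only [h, toAdd_ofAdd, mul_ite, mul_one, mul_zero]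
    rw [Finset.sum_ite_eq Finset.univ t
      (fun s => Multiplicative.toAdd (ψ (FreeGroup.of s)))]
    simp
  | inv_of t ih =>
    simp only [map_inv, toAdd_inv, mul_neg, Finset.sum_neg_distrib]
    rw [ih]
  | mul x y ihx ihy =>
    simp only [map_mul, toAdd_mul]
    rw [ihx, ihy, ← Finset.sum_add_distrib]
    exact Finset.sum_congr rfl fun s _ => (mul_add _ _ _).symm
open Matrix in
lemma forward_le {g n : ℕ} (q : FreeGroup (Fin g ⊕ Fin g) →* FreeGroup (Fin n))
    (hq : Function.Surjective q) (hr : q (surfaceRelator g) = 1) : n ≤ g := by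
  classical
  set τ : Fin n → (FreeGroup (Fin n) →* Multiplicative ℚ) :=
    fun j => FreeGroup.lift fun m => Multiplicative.ofAdd (if m = j then (1 : ℚ) else 0) with hτ
  set σ : (Fin g ⊕ Fin g) → (FreeGroup (Fin g ⊕ Fin g) →* Multiplicative ℚ) :=
    fun s => FreeGroup.lift fun t => Multiplicative.ofAdd (if t = s then (1 : ℚ) else 0) with hσ
  set M : Matrix (Fin n) (Fin g ⊕ Fin g) ℚ :=
    fun j s => Multiplicative.toAdd (τ j (q (FreeGroup.of s))) with hM
  have hsymp : ∀ j k : Fin n, ∑ i : Fin g,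
      (M j (Sum.inl i) * M k (Sum.inr i) - M j (Sum.inr i) * M k (Sum.inl i)) = 0 := by
    intro j k
    set h : FreeGroup (Fin n) →* Heis :=
      FreeGroup.lift fun m =>
        (⟨if m = j then 1 else 0, if m = k then 1 else 0, 0⟩ : Heis) with hh
    have hpa : Heis.pa.comp h = τ j := by
      apply FreeGroup.ext_hom
      intro m
      simp [hh, hτ, Heis.pa, FreeGroup.lift_apply_of]
    have hpb : Heis.pb.comp h = τ k := by
      apply FreeGroup.ext_hom
      intro m
      simp [hh, hτ, Heis.pb, FreeGroup.lift_apply_of]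
    have ha : ∀ v, (h v).a = Multiplicative.toAdd (τ j v) := by
      intro v; rw [← hpa]; rfl
    have hb : ∀ v, (h v).b = Multiplicative.toAdd (τ k v) := by
      intro v; rw [← hpb]; rfl
    have key := hom_surfaceRelator (h.comp q)
    rw [MonoidHom.comp_apply, hr, _root_.map_one] at key
    have hc : (0 : ℚ) = ∑ i : Fin g,
        (((h.comp q) (FreeGroup.of (Sum.inl i))).a * ((h.comp q) (FreeGroup.of (Sum.inr i))).b -
         ((h.comp q) (FreeGroup.of (Sum.inr i))).a * ((h.comp q) (FreeGroup.of (Sum.inl i))).b) :=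
      congrArg Heis.c key
    simp only [MonoidHom.comp_apply] at hc
    have hMa : ∀ s, M j s = (h (q (FreeGroup.of s))).a :=
      fun s => (ha (q (FreeGroup.of s))).symm
    have hMb : ∀ s, M k s = (h (q (FreeGroup.of s))).b :=
      fun s => (hb (q (FreeGroup.of s))).symm
    calc ∑ i : Fin g,
          (M j (Sum.inl i) * M k (Sum.inr i) - M j (Sum.inr i) * M k (Sum.inl i))
        = ∑ i : Fin g,
          ((h (q (FreeGroup.of (Sum.inl i)))).a * (h (q (FreeGroup.of (Sum.inr i)))).b -
           (h (q (FreeGroup.of (Sum.inr i)))).a * (h (q (FreeGroup.of (Sum.inl i)))).b) := by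
          refine Finset.sum_congr rfl fun i _ => ?_
          rw [hMa, hMb, hMa, hMb]
      _ = 0 := hc.symm
  set J : Matrix (Fin g ⊕ Fin g) (Fin g ⊕ Fin g) ℚ :=
    Matrix.fromBlocks 0 1 (-1) 0 with hJ
  have hJJ : J * J = -1 := by
    have h1 : (-1 : Matrix (Fin g ⊕ Fin g) (Fin g ⊕ Fin g) ℚ) =
        Matrix.fromBlocks (-1) (-0) (-0) (-1) := by
      rw [← Matrix.fromBlocks_neg, ← Matrix.fromBlocks_one]
    rw [hJ, Matrix.fromBlocks_multiply, h1]
    simp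
  have hJinv : Invertible J := ⟨-J, by rw [neg_mul, hJJ, neg_neg], by rw [mul_neg, hJJ, neg_neg]⟩
  have hJdet : IsUnit J.det := J.isUnit_det_of_invertible
  have hMJM : M * J * Mᵀ = 0 := by
    ext j k
    have expand : (M * J * Mᵀ) j k = ∑ i : Fin g,
        (M j (Sum.inl i) * M k (Sum.inr i) - M j (Sum.inr i) * M k (Sum.inl i)) := by
      have hMJ : ∀ t, (M * J) j t =
          Sum.elim (fun i => -M j (Sum.inr i)) (fun i => M j (Sum.inl i)) t := by
        intro t
        cases t with
        | inl i =>
          simp [Matrix.mul_apply, Fintype.sum_sum_type, hJ, Matrix.one_apply, mul_ite,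
            Finset.sum_ite_eq', Finset.sum_ite_eq]
        | inr i =>
          simp [Matrix.mul_apply, Fintype.sum_sum_type, hJ, Matrix.one_apply, mul_ite,
            Finset.sum_ite_eq', Finset.sum_ite_eq]
      rw [Matrix.mul_apply, Fintype.sum_sum_type]
      simp only [hMJ, Matrix.transpose_apply, Sum.elim_inl, Sum.elim_inr]
      rw [← Finset.sum_add_distrib]
      apply Finset.sum_congr rfl
      intro i _
      ring
    rw [expand, hsymp j k]
    rfl
  obtain ⟨w, hw⟩ : ∃ w : Fin n → FreeGroup (Fin g ⊕ Fin g), ∀ j, q (w j) = FreeGroup.of j :=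
    ⟨fun j => (hq (FreeGroup.of j)).choose, fun j => (hq (FreeGroup.of j)).choose_spec⟩
  set N : Matrix (Fin g ⊕ Fin g) (Fin n) ℚ :=
    fun s k => Multiplicative.toAdd (σ s (w k)) with hN
  have hMN : M * N = 1 := by
    ext j k
    rw [Matrix.mul_apply]
    have e := expsum ((τ j).comp q) (w k)
    simp only [MonoidHom.comp_apply] at e
    have e2 : ∑ s, M j s * N s k = Multiplicative.toAdd (τ j (q (w k))) := e.symm
    rw [e2, hw]
    by_cases hkj : k = j
    · subst hkj
      simp [hτ, FreeGroup.lift_apply_of, Matrix.one_apply]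
    · simp [hτ, FreeGroup.lift_apply_of, Matrix.one_apply, hkj, Ne.symm hkj]
  have hsurj : Function.Surjective M.mulVecLin := by
    intro v
    refine ⟨N.mulVec v, ?_⟩
    show M.mulVec (N.mulVec v) = v
    rw [Matrix.mulVec_mulVec, hMN, Matrix.one_mulVec]
  have hrankM : M.rank = n := by
    rw [Matrix.rank, LinearMap.range_eq_top.mpr hsurj, finrank_top, Module.finrank_fin_fun]
  have hrankK : (J * Mᵀ).rank = n := by
    rw [Matrix.rank_mul_eq_right_of_isUnit_det J Mᵀ hJdet, Matrix.rank_transpose, hrankM]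
  have hle : LinearMap.range (J * Mᵀ).mulVecLin ≤ LinearMap.ker M.mulVecLin := by
    rintro x ⟨y, rfl⟩
    rw [LinearMap.mem_ker]
    show M.mulVec ((J * Mᵀ).mulVec y) = 0
    rw [Matrix.mulVec_mulVec, ← Matrix.mul_assoc, hMJM, Matrix.zero_mulVec]
  have hdim : M.rank + Module.finrank ℚ (LinearMap.ker M.mulVecLin)
      = Fintype.card (Fin g ⊕ Fin g) := by
    rw [Matrix.rank, LinearMap.finrank_range_add_finrank_ker M.mulVecLin]
    simp [Module.finrank_fintype_fun_eq_card]
  have hKle : (J * Mᵀ).rank ≤ Module.finrank ℚ (LinearMap.ker M.mulVecLin) := by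
    rw [Matrix.rank]
    exact Submodule.finrank_mono hle
  rw [hrankK] at hKle
  rw [hrankM] at hdim
  simp only [Fintype.card_sum, Fintype.card_fin] at hdim
  omega

lemma relator_lift_one (g : ℕ) :
    ∀ r ∈ ({surfaceRelator g} : Set (FreeGroup (Fin g ⊕ Fin g))),
      FreeGroup.lift (Sum.elim (FreeGroup.of : Fin g → FreeGroup (Fin g)) FreeGroup.of) r = 1 := by
  intro r hr
  rw [Set.mem_singleton_iff] at hr
  subst hr
  unfold surfaceRelator
  rw [map_list_prod, List.map_map]
  apply List.prod_eq_one
  intro x hx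
  simp only [List.mem_map, List.mem_finRange, Function.comp_apply] at hx
  obtain ⟨i, -, hi⟩ := hx
  rw [← hi, map_commutatorElement]
  simp [FreeGroup.lift_apply_of]

/-- The canonical projection `Π_g → F_g`, `aᵢ, bᵢ ↦ xᵢ`. -/
noncomputable def surfaceProj (g : ℕ) : SurfaceGroup g →* FreeGroup (Fin g) :=
  PresentedGroup.toGroup (relator_lift_one g)

lemma surfaceProj_of_inl (g : ℕ) (i : Fin g) :
    surfaceProj g (PresentedGroup.of (Sum.inl i)) = FreeGroup.of i :=
  PresentedGroup.toGroup.of (relator_lift_one g)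

lemma surfaceProj_of_inr (g : ℕ) (i : Fin g) :
    surfaceProj g (PresentedGroup.of (Sum.inr i)) = FreeGroup.of i :=
  PresentedGroup.toGroup.of (relator_lift_one g)

lemma surfaceProj_surjective (g : ℕ) : Function.Surjective (surfaceProj g) := by
  set s : FreeGroup (Fin g) →* SurfaceGroup g :=
    FreeGroup.lift fun i => (PresentedGroup.of (Sum.inl i) : SurfaceGroup g) with hs
  have hcomp : (surfaceProj g).comp s = MonoidHom.id _ := by
    apply FreeGroup.ext_hom
    intro i
    simp [hs, FreeGroup.lift_apply_of, surfaceProj_of_inl]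
  intro x
  refine ⟨s x, ?_⟩
  have := congrArg (fun f => f x) hcomp
  simpa using this

theorem surfaceGroup_surjects_onto_freeGroup_iff' (g n : ℕ) (hng : n ≤ g) :
    ∃ p : SurfaceGroup g →* FreeGroup (Fin n), Function.Surjective p := by
  classical
  set π : FreeGroup (Fin g) →* FreeGroup (Fin n) :=
    FreeGroup.lift fun i : Fin g =>
      if h : (i : ℕ) < n then FreeGroup.of (⟨i, h⟩ : Fin n) else 1 with hπ
  refine ⟨π.comp (surfaceProj g), ?_⟩
  set s : FreeGroup (Fin n) →* SurfaceGroup g :=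
    FreeGroup.lift fun j : Fin n =>
      (PresentedGroup.of (Sum.inl (Fin.castLE hng j)) : SurfaceGroup g) with hs
  have hcomp : (π.comp (surfaceProj g)).comp s = MonoidHom.id _ := by
    apply FreeGroup.ext_hom
    intro j
    have h1 : s (FreeGroup.of j) = PresentedGroup.of (Sum.inl (Fin.castLE hng j)) :=
      FreeGroup.lift_apply_of
    have h2 : ((Fin.castLE hng j : Fin g) : ℕ) = (j : ℕ) := rfl
    simp only [MonoidHom.comp_apply, h1, surfaceProj_of_inl, MonoidHom.id_apply, hπ,
      FreeGroup.lift_apply_of]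
    rw [dif_pos (show ((Fin.castLE hng j : Fin g) : ℕ) < n from h2 ▸ j.isLt)]
    exact congrArg FreeGroup.of (Fin.ext h2)
  intro x
  refine ⟨s x, ?_⟩
  have := congrArg (fun f => f x) hcomp
  simpa using this

/-- For `g ≥ 2` and `n ≥ 1` there is a surjective homomorphism `Π_g → F_n` iff `g ≥ n`;
in particular the map `p : Π_g → F_g` with `p(aᵢ) = p(bᵢ) = xᵢ` is a well-defined
surjective homomorphism. -/
theorem surfaceGroup_surjects_onto_freeGroup_iff (g n : ℕ) (hg : 2 ≤ g) (hn : 1 ≤ n) :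
    ((∃ p : SurfaceGroup g →* FreeGroup (Fin n), Function.Surjective p) ↔ n ≤ g) ∧
    (∃ p : SurfaceGroup g →* FreeGroup (Fin g),
      (∀ i : Fin g,
        p (PresentedGroup.of (rels := {surfaceRelator g}) (Sum.inl i)) = FreeGroup.of i ∧
        p (PresentedGroup.of (rels := {surfaceRelator g}) (Sum.inr i)) = FreeGroup.of i) ∧
      Function.Surjective p) := by
  constructor
  · constructor
    · rintro ⟨p, hp⟩
      set q : FreeGroup (Fin g ⊕ Fin g) →* FreeGroup (Fin n) :=
        p.comp (PresentedGroup.mk {surfaceRelator g}) with hq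
      have hqsurj : Function.Surjective q :=
        hp.comp (PresentedGroup.mk_surjective _)
      have hmk : PresentedGroup.mk {surfaceRelator g} (surfaceRelator g) = 1 := by
        apply (QuotientGroup.eq_one_iff _).mpr
        exact Subgroup.subset_normalClosure (Set.mem_singleton _)
      have hr : q (surfaceRelator g) = 1 := by
        rw [hq, MonoidHom.comp_apply, hmk, map_one]
      exact forward_le q hqsurj hr
    · exact fun hng => surfaceGroup_surjects_onto_freeGroup_iff' g n hng
  · exact ⟨surfaceProj g,
      fun i => ⟨surfaceProj_of_inl g i, surfaceProj_of_inr g i⟩,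
      surfaceProj_surjective g⟩
end

section
/- For every g ≥ 2, the abelianization of the surface group Π_g is a free abelian group of rank 2g; that is, there is a group isomorphism between the abelianization of Π_g and ℤ^{2g} (equivalently, Hom(Π_g, ℤ) is a free ℤ-module of rank 2g). -/
open scoped commutatorElement

/-- If `N` is contained in the commutator subgroup, quotienting by it doesn't change
the abelianization. -/
noncomputable def abQuotEquiv {G : Type*} [Group G] (N : Subgroup G) [N.Normal]
    (h : N ≤ commutator G) : Abelianization (G ⧸ N) ≃* Abelianization G := by
  refine MonoidHom.toMulEquiv
    (Abelianization.lift (QuotientGroup.lift N (Abelianization.of)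
      (fun x hx => by
        rw [← QuotientGroup.ker_mk' (commutator G)] at h
        exact h hx)))
    (Abelianization.lift ((Abelianization.of).comp (QuotientGroup.mk' N))) ?_ ?_
  · ext x
    rfl
  · ext x
    rfl

theorem relator_mem_commutator (g : ℕ) :
    surfaceRelator g ∈ commutator (FreeGroup (Fin g ⊕ Fin g)) := by
  apply Subgroup.list_prod_mem
  intro x hx
  simp only [List.mem_map] at hx
  obtain ⟨i, -, rfl⟩ := hx
  exact Subgroup.commutator_mem_commutator (Subgroup.mem_top _) (Subgroup.mem_top _)

/-- For `g ≥ 2`, the abelianization of the surface group `Π_g` is free abelian of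
rank `2g`, i.e. isomorphic (as a group, written multiplicatively) to `ℤ^{2g}`. -/
theorem abelianization_surfaceGroup_free_of_rank_two_g (g : ℕ) (hg : 2 ≤ g) :
    Nonempty (Abelianization (SurfaceGroup g) ≃* Multiplicative (Fin (2 * g) → ℤ)) := by
  have h : Subgroup.normalClosure ({surfaceRelator g} : Set (FreeGroup (Fin g ⊕ Fin g))) ≤
      commutator (FreeGroup (Fin g ⊕ Fin g)) := by
    apply Subgroup.normalClosure_le_normal
    intro x hx
    rw [Set.mem_singleton_iff] at hx
    subst hx
    exact relator_mem_commutator g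
  have e1 : Abelianization (SurfaceGroup g) ≃* Abelianization (FreeGroup (Fin g ⊕ Fin g)) :=
    abQuotEquiv _ h
  have e2 : Abelianization (FreeGroup (Fin g ⊕ Fin g)) ≃*
      Multiplicative (FreeAbelianGroup (Fin g ⊕ Fin g)) := MulEquiv.refl _
  have efin : (Fin g ⊕ Fin g) ≃ Fin (2 * g) := (finSumFinEquiv.trans (finCongr (by ring)))
  have e3 : FreeAbelianGroup (Fin g ⊕ Fin g) ≃+ (Fin (2 * g) → ℤ) :=
    (FreeAbelianGroup.equivFinsupp _).trans
      ((Finsupp.domCongr efin).trans (Finsupp.linearEquivFunOnFinite ℤ ℤ (Fin (2*g))).toAddEquiv)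
  exact ⟨e1.trans (e2.trans e3.toMultiplicative)⟩
end

section
/- For any free group F (for instance FreeGroup α for any type α), the second group cohomology of F with trivial coefficients ℤ vanishes: H²(F, ℤ) = 0. -/
/-- Type synonym for `ℤ × FreeGroup α`, to carry the extension group structure
associated to a 2-cocycle `f`. -/
def FreeGroupExt (α : Type) (_f : FreeGroup α × FreeGroup α → ℤ) : Type :=
  ℤ × FreeGroup α

/-- Every 2-cocycle on a free group with trivial `ℤ` coefficients is a coboundary. -/
theorem freeGroup_twoCocycle_is_coboundary {α : Type} (f : FreeGroup α × FreeGroup α → ℤ)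
    (hf : ∀ a b c : FreeGroup α, f (b, c) - f (a * b, c) + f (a, b * c) - f (a, b) = 0) :
    ∃ g : FreeGroup α → ℤ, ∀ a b : FreeGroup α, g b - g (a * b) + g a = f (a, b) := by
  classical
  have h1b : ∀ b : FreeGroup α, f (1, b) = f (1, 1) := fun b => by
    have := hf 1 1 b; rw [one_mul, one_mul] at this; linarith
  have hb1 : ∀ b : FreeGroup α, f (b, 1) = f (1, 1) := fun b => by
    have := hf b 1 1; rw [mul_one, one_mul] at this; linarith
  have hinv : ∀ b : FreeGroup α, f (b⁻¹, b) = f (b, b⁻¹) := fun b => by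
    have := hf b b⁻¹ b
    rw [mul_inv_cancel, inv_mul_cancel, h1b b, hb1 b] at this
    linarith
  letI grp : Group (FreeGroupExt α f) :=
    { mul := fun x y => (x.1 + y.1 - f (x.2, y.2), x.2 * y.2)
      one := ((f ((1 : FreeGroup α), (1 : FreeGroup α)) : ℤ), (1 : FreeGroup α))
      inv := fun x =>
        ((f ((1 : FreeGroup α), (1 : FreeGroup α)) + f (x.2, x.2⁻¹) - x.1 : ℤ), x.2⁻¹)
      mul_assoc := fun x y z => by
        refine Prod.ext ?_ (mul_assoc x.2 y.2 z.2)
        have := hf x.2 y.2 z.2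
        show x.1 + y.1 - f (x.2, y.2) + z.1 - f (x.2 * y.2, z.2)
            = x.1 + (y.1 + z.1 - f (y.2, z.2)) - f (x.2, y.2 * z.2)
        linarith
      one_mul := fun x => by
        refine Prod.ext ?_ (one_mul x.2)
        show f (1, 1) + x.1 - f (1, x.2) = x.1
        rw [h1b x.2]; ring
      mul_one := fun x => by
        refine Prod.ext ?_ (mul_one x.2)
        show x.1 + f (1, 1) - f (x.2, 1) = x.1
        rw [hb1 x.2]; ring
      inv_mul_cancel := fun x => by
        refine Prod.ext ?_ (inv_mul_cancel x.2)
        show f (1, 1) + f (x.2, x.2⁻¹) - x.1 + x.1 - f (x.2⁻¹, x.2) = f (1, 1)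
        rw [hinv x.2]; ring }
  set σ : FreeGroup α →* (FreeGroupExt α f) :=
    FreeGroup.lift (fun x => (((0 : ℤ), FreeGroup.of x) : FreeGroupExt α f)) with hσ
  have hmulsnd : ∀ x y : FreeGroupExt α f, (x * y).2 = x.2 * y.2 := fun _ _ => rfl
  have hsnd : ∀ w : FreeGroup α, (σ w).2 = w := by
    intro w
    induction w using FreeGroup.induction_on with
    | C1 => rw [map_one]; rfl
    | of x =>
        show (σ (FreeGroup.of x)).2 = FreeGroup.of x
        rw [hσ]; exact congrArg Prod.snd (FreeGroup.lift_apply_of (β := FreeGroupExt α f) (f := fun x => (((0 : ℤ), FreeGroup.of x) : FreeGroupExt α f)))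
    | inv_of x ih =>
        have ih' : (σ (FreeGroup.of x)).2 = FreeGroup.of x := ih
        rw [map_inv]
        show ((σ (FreeGroup.of x)).2)⁻¹ = (FreeGroup.of x)⁻¹
        rw [ih']
    | mul a b iha ihb =>
        rw [map_mul, hmulsnd, iha, ihb]
  refine ⟨fun a => (σ a).1, fun a b => ?_⟩
  have h1 := congrArg Prod.fst (map_mul σ a b)
  have h2 : (σ a * σ b).1 = (σ a).1 + (σ b).1 - f ((σ a).2, (σ b).2) := rfl
  rw [h2, hsnd, hsnd] at h1
  dsimp only at h1 ⊢
  linarith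

/-- For any free group `F`, the second group cohomology with trivial coefficients `ℤ`
vanishes: `H²(F, ℤ) = 0`. -/
theorem groupCohomology_two_freeGroup_trivial_int (α : Type) :
    Subsingleton (groupCohomology (Rep.trivial ℤ (FreeGroup α) ℤ) 2) := by
  set A := Rep.trivial ℤ (FreeGroup α) ℤ with hA
  have h2 : Subsingleton (groupCohomology.H2 A) := by
    suffices hz : ∀ y : groupCohomology.H2 A, y = 0 from ⟨fun u v => by rw [hz u, hz v]⟩
    intro y
    induction y using groupCohomology.H2_induction_on with
    | h x =>
    rw [groupCohomology.H2π_eq_zero_iff]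
    obtain ⟨g, hg⟩ := freeGroup_twoCocycle_is_coboundary (x : FreeGroup α × FreeGroup α → ℤ)
      (by
        intro a b c
        have := (groupCohomology.mem_cocycles₂_def (A := A)
          (x : FreeGroup α × FreeGroup α → ℤ)).1 x.2 a b c
        simpa [Rep.trivial_ρ_apply] using this)
    exact ⟨g, funext fun ab => by
      obtain ⟨a, b⟩ := ab
      simpa [groupCohomology.d₁₂_hom_apply, Rep.trivial_ρ_apply] using hg a b⟩
  exact @Equiv.subsingleton _ _
    ((CategoryTheory.forget (ModuleCat ℤ)).mapIso (CategoryTheory.Iso.refl (groupCohomology.H2 A))).toEquiv h2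
end

section
/- Let Γ be a group, let g ≥ 2 and g' ≥ 1, and let φ : Γ → F_g be a surjective group homomorphism onto the free group of rank g whose kernel is finitely generated. Suppose φ factors as φ = ρ ∘ ψ where ψ : Γ → F_{g'} is a surjective group homomorphism onto the free group of rank g' and ρ : F_{g'} → F_g is a group homomorphism. Then ρ is a group isomorphism, and consequently g' = g. -/
/-- The wreath-type group `(ℤ/d → ℤ/2) ⋊ ℤ/d` used to parametrize 1-cocycles. -/
structure Wd (d : ℕ) where
  a : ZMod d → ZMod 2
  s : ZMod d

namespace Wd

variable {d : ℕ}

lemma ext' {x y : Wd d} (h1 : x.a = y.a) (h2 : x.s = y.s) : x = y := by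
  cases x; cases y; simp_all

instance : Mul (Wd d) := ⟨fun x y => ⟨fun i => x.a i + y.a (i + x.s), x.s + y.s⟩⟩
instance : One (Wd d) := ⟨⟨0, 0⟩⟩
instance : Inv (Wd d) := ⟨fun x => ⟨fun i => - x.a (i - x.s), - x.s⟩⟩

@[simp] lemma mul_a (x y : Wd d) (i : ZMod d) : (x * y).a i = x.a i + y.a (i + x.s) := rfl
@[simp] lemma mul_s (x y : Wd d) : (x * y).s = x.s + y.s := rfl
@[simp] lemma one_a (i : ZMod d) : (1 : Wd d).a i = 0 := rfl
@[simp] lemma one_s : (1 : Wd d).s = 0 := rfl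
@[simp] lemma inv_a (x : Wd d) (i : ZMod d) : (x⁻¹).a i = - x.a (i - x.s) := rfl
@[simp] lemma inv_s (x : Wd d) : (x⁻¹).s = - x.s := rfl

instance : Group (Wd d) where
  mul_assoc x y z := by
    refine ext' (funext fun i => ?_) ?_
    · simp [add_assoc]
    · simp [add_assoc]
  one_mul x := by refine ext' (funext fun i => ?_) ?_ <;> simp
  mul_one x := by refine ext' (funext fun i => ?_) ?_ <;> simp
  inv_mul_cancel x := by
    refine ext' (funext fun i => ?_) ?_
    · simp [sub_eq_add_neg, add_comm]; exact CharTwo.add_self_eq_zero _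
    · simp

/-- Projection to the second (acting) coordinate. -/
def snd : Wd d →* Multiplicative (ZMod d) where
  toFun x := Multiplicative.ofAdd x.s
  map_one' := rfl
  map_mul' x y := rfl

@[simp] lemma snd_apply (x : Wd d) : snd x = Multiplicative.ofAdd x.s := rfl

end Wd

namespace FGCount

open Multiplicative

variable {n d : ℕ} [NeZero d]
variable (χ : FreeGroup (Fin n) →* Multiplicative (ZMod d))

/-- Transversal for the kernel of `χ`, given `s` with `χ s = ofAdd 1`. -/
def tv (s : FreeGroup (Fin n)) (j : ZMod d) : FreeGroup (Fin n) := s ^ j.val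

lemma tv_zero (s : FreeGroup (Fin n)) : tv s (0 : ZMod d) = 1 := by
  simp [tv, ZMod.val_zero]

variable {s : FreeGroup (Fin n)} (hs : χ s = ofAdd 1)

include hs in
lemma chi_tv (j : ZMod d) : χ (tv s j) = ofAdd j := by
  rw [tv, map_pow, hs, ← ofAdd_nsmul, nsmul_eq_mul, mul_one, ZMod.natCast_rightInverse j]

include hs in
lemma mem_ker_elt (u : FreeGroup (Fin n)) (i : ZMod d) :
    tv s i * u * (tv s (i + toAdd (χ u)))⁻¹ ∈ χ.ker := by
  rw [MonoidHom.mem_ker, map_mul, map_mul, map_inv, chi_tv χ hs, chi_tv χ hs,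
    mul_inv_eq_one, ofAdd_add, ofAdd_toAdd]

lemma hom_congr (h : χ.ker →* Multiplicative (ZMod 2)) {x y : FreeGroup (Fin n)}
    (hx : x ∈ χ.ker) (hy : y ∈ χ.ker) (e : x = y) : h ⟨x, hx⟩ = h ⟨y, hy⟩ := by
  subst e; rfl

lemma hom_mul (h : χ.ker →* Multiplicative (ZMod 2)) {x y : FreeGroup (Fin n)}
    (hx : x ∈ χ.ker) (hy : y ∈ χ.ker) :
    h ⟨x * y, mul_mem hx hy⟩ = h ⟨x, hx⟩ * h ⟨y, hy⟩ := by
  rw [show (⟨x * y, mul_mem hx hy⟩ : χ.ker) = ⟨x, hx⟩ * ⟨y, hy⟩ from rfl, map_mul]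

/-- The lift of `χ` to the wreath-type group determined by a homomorphism on the
kernel and a twisting function. -/
def mkLift (h : χ.ker →* Multiplicative (ZMod 2)) (a : ZMod d → ZMod 2) :
    FreeGroup (Fin n) →* Wd d where
  toFun u := ⟨fun i => toAdd (h ⟨tv s i * u * (tv s (i + toAdd (χ u)))⁻¹, mem_ker_elt χ hs u i⟩)
      + (a (i + toAdd (χ u)) - a i), toAdd (χ u)⟩
  map_one' := by
    refine Wd.ext' (funext fun i => ?_) (by simp)
    dsimp only
    have e : tv s i * 1 * (tv s (i + toAdd (χ 1)))⁻¹ = 1 := by simp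
    rw [hom_congr χ h _ (one_mem _) e]
    have h1 : (⟨1, one_mem _⟩ : χ.ker) = 1 := rfl
    rw [h1, map_one]
    simp
  map_mul' u v := by
    refine Wd.ext' (funext fun i => ?_) (by simp)
    dsimp only
    simp only [map_mul χ u v, toAdd_mul, ← add_assoc, Wd.mul_a, Wd.mul_s]
    have e : tv s i * (u * v) * (tv s (i + toAdd (χ u) + toAdd (χ v)))⁻¹
        = (tv s i * u * (tv s (i + toAdd (χ u)))⁻¹)
          * (tv s (i + toAdd (χ u)) * v * (tv s (i + toAdd (χ u) + toAdd (χ v)))⁻¹) := by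
      group
    rw [hom_congr χ h _ (mul_mem (mem_ker_elt χ hs u i) (mem_ker_elt χ hs v (i + toAdd (χ u)))) e,
      hom_mul χ h (mem_ker_elt χ hs u i) (mem_ker_elt χ hs v (i + toAdd (χ u))), toAdd_mul]
    ring

lemma snd_comp_mkLift (h : χ.ker →* Multiplicative (ZMod 2)) (a : ZMod d → ZMod 2) :
    Wd.snd.comp (mkLift χ hs h a) = χ :=
  FreeGroup.ext_hom _ _ fun i => by simp [mkLift]

/-- The homomorphism on the kernel obtained from a lift. -/
def theta (Φ : FreeGroup (Fin n) →* Wd d) (hΦ : Wd.snd.comp Φ = χ) :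
    χ.ker →* Multiplicative (ZMod 2) where
  toFun p := ofAdd ((Φ (p : FreeGroup (Fin n))).a 0)
  map_one' := by
    simp only [OneMemClass.coe_one, map_one, Wd.one_a, ofAdd_zero]
  map_mul' p q := by
    have hp : (Φ (p : FreeGroup (Fin n))).s = 0 := by
      have h1 : Wd.snd (Φ (p : FreeGroup (Fin n))) = χ (p : FreeGroup (Fin n)) :=
        DFunLike.congr_fun hΦ _
      rw [Wd.snd_apply, p.2, show (1 : Multiplicative (ZMod d)) = ofAdd 0 from rfl] at h1
      exact ofAdd.injective h1
    rw [Subgroup.coe_mul, map_mul, ← ofAdd_add, Wd.mul_a, hp, zero_add]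

lemma theta_snd (Φ : FreeGroup (Fin n) →* Wd d) (hΦ : Wd.snd.comp Φ = χ)
    (u : FreeGroup (Fin n)) : (Φ u).s = toAdd (χ u) := by
  have h1 : Wd.snd (Φ u) = χ u := DFunLike.congr_fun hΦ _
  rw [Wd.snd_apply] at h1
  rw [← h1, toAdd_ofAdd]

/-- The central equivalence: pairs (hom on kernel, normalized twist) correspond to lifts. -/
noncomputable def bigEquiv :
    ((χ.ker →* Multiplicative (ZMod 2)) × {a : ZMod d → ZMod 2 // a 0 = 0})
      ≃ {Φ : FreeGroup (Fin n) →* Wd d // Wd.snd.comp Φ = χ} where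
  toFun x := ⟨mkLift χ hs x.1 x.2.1, snd_comp_mkLift χ hs x.1 x.2.1⟩
  invFun Φ := ⟨theta χ Φ.1 Φ.2,
    ⟨fun j => (Φ.1 (tv s j)).a 0, by simp [tv_zero]⟩⟩
  left_inv x := by
    obtain ⟨h, a, ha⟩ := x
    refine Prod.ext ?_ (Subtype.ext (funext fun j => ?_))
    · refine MonoidHom.ext fun p => ?_
      show ofAdd ((mkLift χ hs h a (p : FreeGroup (Fin n))).a 0) = h p
      have hT : toAdd (χ (p : FreeGroup (Fin n))) = 0 := by rw [p.2, toAdd_one]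
      simp only [mkLift, MonoidHom.coe_mk, OneHom.coe_mk, hT, add_zero, tv_zero, zero_add]
      have e : (1 : FreeGroup (Fin n)) * (p : FreeGroup (Fin n)) * (1 : FreeGroup (Fin n))⁻¹
          = (p : FreeGroup (Fin n)) := by group
      rw [hom_congr χ h _ p.2 e, sub_self, add_zero, Subtype.coe_eta, ofAdd_toAdd]
    · show (mkLift χ hs h a (tv s j)).a 0 = a j
      have hT : toAdd (χ (tv s j)) = j := by rw [chi_tv χ hs, toAdd_ofAdd]
      simp only [mkLift, MonoidHom.coe_mk, OneHom.coe_mk, hT, tv_zero, zero_add]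
      have e : (1 : FreeGroup (Fin n)) * tv s j * (tv s j)⁻¹ = 1 := by group
      rw [hom_congr χ h _ (one_mem _) e, show (⟨1, one_mem _⟩ : χ.ker) = 1 from rfl, map_one,
        toAdd_one, zero_add, ha, sub_zero]
  right_inv Φ := by
    obtain ⟨Φ, hΦ⟩ := Φ
    refine Subtype.ext (MonoidHom.ext fun u => ?_)
    refine Wd.ext' (funext fun i => ?_) ?_
    · show toAdd (theta χ Φ hΦ ⟨tv s i * u * (tv s (i + toAdd (χ u)))⁻¹, _⟩)
        + (((Φ (tv s (i + toAdd (χ u)))).a 0) - ((Φ (tv s i)).a 0)) = (Φ u).a i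
      have h1 : toAdd (theta χ Φ hΦ ⟨tv s i * u * (tv s (i + toAdd (χ u)))⁻¹,
          mem_ker_elt χ hs u i⟩) = (Φ (tv s i * u * (tv s (i + toAdd (χ u)))⁻¹)).a 0 := rfl
      rw [h1, map_mul, map_mul, map_inv]
      rw [Wd.mul_a, Wd.mul_a, Wd.inv_a, Wd.mul_s]
      rw [theta_snd χ Φ hΦ (tv s i), theta_snd χ Φ hΦ (tv s (i + toAdd (χ u))),
        theta_snd χ Φ hΦ u, chi_tv χ hs, chi_tv χ hs, toAdd_ofAdd, toAdd_ofAdd]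
      have e0 : (0 : ZMod d) + (i + toAdd (χ u)) - (i + toAdd (χ u)) = 0 := by ring
      rw [e0]
      have e1 : (0 : ZMod d) + i = i := by ring
      rw [e1]
      ring
    · show toAdd (χ u) = (Φ u).s
      rw [theta_snd χ Φ hΦ u]

/-- Lifts are parametrized by arbitrary choices on the free generators. -/
noncomputable def liftEquiv :
    {Φ : FreeGroup (Fin n) →* Wd d // Wd.snd.comp Φ = χ} ≃ (Fin n → (ZMod d → ZMod 2)) where
  toFun Φ i := (Φ.1 (FreeGroup.of i)).a
  invFun b := ⟨FreeGroup.lift (fun i => ⟨b i, toAdd (χ (FreeGroup.of i))⟩),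
    FreeGroup.ext_hom _ _ fun i => by simp⟩
  left_inv Φ := by
    obtain ⟨Φ, hΦ⟩ := Φ
    refine Subtype.ext (FreeGroup.ext_hom _ _ fun i => ?_)
    rw [FreeGroup.lift_apply_of]
    exact Wd.ext' rfl (theta_snd χ Φ hΦ (FreeGroup.of i)).symm
  right_inv b := funext fun i => by simp

/-- Normalized twists. -/
def twistEquiv : {a : ZMod d → ZMod 2 // a 0 = 0} ≃ ({j : ZMod d // ¬ j = 0} → ZMod 2) where
  toFun a j := a.1 j.1
  invFun f := ⟨fun j => if h : j = 0 then 0 else f ⟨j, h⟩, by simp⟩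
  left_inv a := by
    refine Subtype.ext (funext fun j => ?_)
    by_cases h : j = 0
    · subst h; simp [a.2]
    · simp [h]
  right_inv f := funext fun j => by simp [j.2]

private lemma exp_arith {n d : ℕ} (hn : 1 ≤ n) (hd : 1 ≤ d) :
    d * (n - 1) + 1 + (d - 1) = d * n := by
  obtain ⟨m, rfl⟩ : ∃ m, n = m + 1 := ⟨n - 1, by omega⟩
  have h : d * (m + 1) = d * m + d := by ring
  simp only [Nat.add_sub_cancel]
  omega

theorem finite_and_card (hn : 1 ≤ n) (hχ : Function.Surjective χ) :
    Finite (χ.ker →* Multiplicative (ZMod 2)) ∧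
      Nat.card (χ.ker →* Multiplicative (ZMod 2)) = 2 ^ (d * (n - 1) + 1) := by
  obtain ⟨s, hs⟩ := hχ (ofAdd 1)
  have E := (bigEquiv χ hs).trans (liftEquiv χ)
  haveI : Finite ((χ.ker →* Multiplicative (ZMod 2)) × {a : ZMod d → ZMod 2 // a 0 = 0}) :=
    Finite.of_equiv _ E.symm
  haveI : Nonempty {a : ZMod d → ZMod 2 // a 0 = 0} := ⟨⟨0, rfl⟩⟩
  haveI hfin : Finite (χ.ker →* Multiplicative (ZMod 2)) := Finite.prod_left {a : ZMod d → ZMod 2 // a 0 = 0}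
  refine ⟨hfin, ?_⟩
  have h1 : Nat.card ((χ.ker →* Multiplicative (ZMod 2)) × {a : ZMod d → ZMod 2 // a 0 = 0})
      = 2 ^ (d * n) := by
    rw [Nat.card_congr E, Nat.card_eq_fintype_card, Fintype.card_fun, Fintype.card_fun]
    simp [ZMod.card, Fintype.card_fin, ← pow_mul]
  have h2 : Nat.card {a : ZMod d → ZMod 2 // a 0 = 0} = 2 ^ (d - 1) := by
    rw [Nat.card_congr (twistEquiv (d := d)), Nat.card_eq_fintype_card, Fintype.card_fun,
      ZMod.card, Fintype.card_subtype_compl, ZMod.card, Fintype.card_subtype_eq]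
  rw [Nat.card_prod, h2] at h1
  have hd : 1 ≤ d := Nat.one_le_iff_ne_zero.mpr (NeZero.ne d)
  have hexp : d * (n - 1) + 1 + (d - 1) = d * n := exp_arith hn hd
  refine Nat.eq_of_mul_eq_mul_right (pow_pos two_pos (d - 1)) ?_
  rw [h1, ← pow_add, hexp]

end FGCount

namespace ResFin

variable {n : ℕ}

/-- Forward condition: position `L.length - 1 - v` carries letter `(i, true)`. -/
def A (L : List (Fin n × Bool)) (i : Fin n) (v : ℕ) : Prop :=
  v < L.length ∧ L[L.length - 1 - v]? = some (i, true)

/-- Backward condition: position `L.length - v` carries letter `(i, false)`. -/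
def B (L : List (Fin n × Bool)) (i : Fin n) (v : ℕ) : Prop :=
  1 ≤ v ∧ L[L.length - v]? = some (i, false)

def A' (L : List (Fin n × Bool)) (i : Fin n) (v : ℕ) : Prop :=
  1 ≤ v ∧ L[L.length - v]? = some (i, true)

def B' (L : List (Fin n × Bool)) (i : Fin n) (v : ℕ) : Prop :=
  v < L.length ∧ L[L.length - 1 - v]? = some (i, false)

lemma not_pair {L : List (Fin n × Bool)} (hred : FreeGroup.reduce L = L) {t : ℕ} {i : Fin n}
    {b : Bool} (h1 : t + 1 < L.length) (h2 : L[t]? = some (i, b))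
    (h3 : L[t + 1]? = some (i, !b)) : False := by
  have ht : t < L.length := by omega
  have e1 : L[t]'ht = (i, b) := by
    rw [List.getElem?_eq_getElem ht] at h2
    exact Option.some_injective _ h2
  have e2 : L[t + 1]'h1 = (i, !b) := by
    rw [List.getElem?_eq_getElem h1] at h3
    exact Option.some_injective _ h3
  have hdec : L = L.take t ++ (i, b) :: (i, !b) :: L.drop (t + 2) := by
    conv_lhs => rw [← List.take_append_drop t L]
    congr 1
    rw [List.drop_eq_getElem_cons ht, e1, List.drop_eq_getElem_cons h1, e2]
  exact FreeGroup.reduce.not (hred.trans hdec)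

open scoped Classical in
/-- The partial bijection induced by the occurrences of the letter `i` in `L`. -/
noncomputable def eqv (L : List (Fin n × Bool)) (hred : FreeGroup.reduce L = L) (i : Fin n) :
    {v : Fin (L.length + 1) // A L i v.val ∨ B L i v.val}
      ≃ {v : Fin (L.length + 1) // A' L i v.val ∨ B' L i v.val} where
  toFun x :=
    if h : A L i x.1.val then
      have hp : A' L i (x.1.val + 1) := ⟨Nat.succ_le_succ (Nat.zero_le _), by
        have e : L.length - (x.1.val + 1) = L.length - 1 - x.1.val := by omega
        rw [e]; exact h.2⟩
      ⟨⟨x.1.val + 1, Nat.succ_lt_succ h.1⟩, Or.inl hp⟩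
    else
      have hB : B L i x.1.val := x.2.resolve_left h
      have hp : B' L i (x.1.val - 1) := ⟨by have h1 := hB.1; have h2 := x.1.isLt; omega, by
        have e : L.length - 1 - (x.1.val - 1) = L.length - x.1.val := by
          have h1 := hB.1; have h2 := x.1.isLt; omega
        rw [e]; exact hB.2⟩
      ⟨⟨x.1.val - 1, lt_of_le_of_lt (Nat.sub_le _ _) x.1.isLt⟩, Or.inr hp⟩
  invFun y :=
    if h : A' L i y.1.val then
      have hp : A L i (y.1.val - 1) := ⟨by have h1 := h.1; have h2 := y.1.isLt; omega, by
        have e : L.length - 1 - (y.1.val - 1) = L.length - y.1.val := by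
          have h1 := h.1; have h2 := y.1.isLt; omega
        rw [e]; exact h.2⟩
      ⟨⟨y.1.val - 1, lt_of_le_of_lt (Nat.sub_le _ _) y.1.isLt⟩, Or.inl hp⟩
    else
      have hB : B' L i y.1.val := y.2.resolve_left h
      have hp : B L i (y.1.val + 1) := ⟨Nat.succ_le_succ (Nat.zero_le _), by
        have e : L.length - (y.1.val + 1) = L.length - 1 - y.1.val := by omega
        rw [e]; exact hB.2⟩
      ⟨⟨y.1.val + 1, Nat.succ_lt_succ hB.1⟩, Or.inr hp⟩
  left_inv x := by
    by_cases h : A L i x.1.val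
    · have hA' : A' L i (x.1.val + 1) := ⟨Nat.succ_le_succ (Nat.zero_le _), by
        have e : L.length - (x.1.val + 1) = L.length - 1 - x.1.val := by omega
        rw [e]; exact h.2⟩
      simp only [dif_pos h, dif_pos hA']
      exact Subtype.ext (Fin.ext (by simp))
    · have hB : B L i x.1.val := x.2.resolve_left h
      have hnA' : ¬ A' L i (x.1.val - 1) := by
        intro hA'
        have h1 : 1 ≤ x.1.val - 1 := hA'.1
        have h2 := x.1.isLt
        refine not_pair hred (t := L.length - x.1.val) (i := i) (b := false) (by omega) hB.2 ?_
        have e : L.length - x.1.val + 1 = L.length - (x.1.val - 1) := by omega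
        rw [e]
        exact hA'.2
      simp only [dif_neg h, dif_neg hnA']
      refine Subtype.ext (Fin.ext ?_)
      have h1 := hB.1
      simp
      omega
  right_inv y := by
    by_cases h : A' L i y.1.val
    · have hA : A L i (y.1.val - 1) := ⟨by have := y.1.isLt; have := h.1; omega, by
        have e : L.length - 1 - (y.1.val - 1) = L.length - y.1.val := by
          have := h.1; have := y.1.isLt; omega
        rw [e]; exact h.2⟩
      simp only [dif_pos h, dif_pos hA]
      refine Subtype.ext (Fin.ext ?_)
      have h1 := h.1
      simp
      omega
    · have hB : B' L i y.1.val := y.2.resolve_left h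
      have hnA : ¬ A L i (y.1.val + 1) := by
        intro hA
        have h1 : y.1.val + 1 < L.length := hA.1
        refine not_pair hred (t := L.length - 1 - (y.1.val + 1)) (i := i) (b := true)
          (by omega) hA.2 ?_
        have e : L.length - 1 - (y.1.val + 1) + 1 = L.length - 1 - y.1.val := by omega
        rw [e]
        exact hB.2
      simp only [dif_neg h, dif_neg hnA]
      exact Subtype.ext (Fin.ext (by simp))

open scoped Classical in
/-- The permutation representation attached to letter `i`. -/
noncomputable def sigma (L : List (Fin n × Bool)) (hred : FreeGroup.reduce L = L) (i : Fin n) :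
    Equiv.Perm (Fin (L.length + 1)) :=
  (eqv L hred i).extendSubtype

lemma sigma_A {L : List (Fin n × Bool)} (hred : FreeGroup.reduce L = L) {i : Fin n}
    {v : Fin (L.length + 1)} (h : A L i v.val) :
    sigma L hred i v = ⟨v.val + 1, Nat.succ_lt_succ h.1⟩ := by
  classical
  rw [sigma, Equiv.extendSubtype_apply_of_mem (eqv L hred i) v (Or.inl h)]
  show ((eqv L hred i) ⟨v, Or.inl h⟩).1 = _
  rw [eqv]
  simp only [Equiv.coe_fn_mk, dif_pos h]

lemma sigma_B {L : List (Fin n × Bool)} (hred : FreeGroup.reduce L = L) {i : Fin n}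
    {v : Fin (L.length + 1)} (hA : ¬ A L i v.val) (h : B L i v.val) :
    sigma L hred i v = ⟨v.val - 1, lt_of_le_of_lt (Nat.sub_le _ _) v.isLt⟩ := by
  classical
  rw [sigma, Equiv.extendSubtype_apply_of_mem (eqv L hred i) v (Or.inr h)]
  show ((eqv L hred i) ⟨v, Or.inr h⟩).1 = _
  rw [eqv]
  simp only [Equiv.coe_fn_mk, dif_neg hA]

theorem exists_perm_hom (w : FreeGroup (Fin n)) (hw : w ≠ 1) :
    ∃ (N : ℕ) (π : FreeGroup (Fin n) →* Equiv.Perm (Fin N)), π w ≠ 1 := by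
  classical
  set L := w.toWord with hLdef
  have hred : FreeGroup.reduce L = L := FreeGroup.reduce_toWord w
  have hm1 : 1 ≤ L.length := by
    by_contra h
    push_neg at h
    have : L = [] := List.length_eq_zero_iff.mp (by omega)
    exact hw (FreeGroup.toWord_eq_nil_iff.mp this)
  set m := L.length with hmdef
  refine ⟨m + 1, FreeGroup.lift (sigma L hred), ?_⟩
  set f : Fin n × Bool → Equiv.Perm (Fin (m + 1)) :=
    fun x => cond x.2 (sigma L hred x.1) (sigma L hred x.1)⁻¹ with hfdef
  have walk : ∀ k : ℕ, k ≤ m → ∀ (hk : k < m + 1),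
      ((L.drop (m - k)).map f).prod ⟨0, by omega⟩ = ⟨k, hk⟩ := by
    intro k
    induction k with
    | zero =>
      intro _ hk
      have hdrop : L.drop (m - 0) = [] := by
        rw [Nat.sub_zero, hmdef]
        exact List.drop_length
      rw [hdrop]
      simp
    | succ k ih =>
      intro hk1 hk2
      have ht' : m - (k + 1) < L.length := by omega
      rw [List.drop_eq_getElem_cons ht', List.map_cons, List.prod_cons]
      have e1 : m - (k + 1) + 1 = m - k := by omega
      rw [e1, Equiv.Perm.mul_apply, ih (by omega) (by omega)]
      have hget : L[m - (k + 1)]? = some (L[m - (k + 1)]'ht') :=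
        List.getElem?_eq_getElem ht'
      rcases hp : L[m - (k + 1)]'ht' with ⟨i, b⟩
      rw [hp] at hget
      cases b
      · -- backward letter: apply the inverse permutation
        have hB : B L i (k + 1) := ⟨Nat.succ_le_succ (Nat.zero_le _), by
          have e : L.length - (k + 1) = m - (k + 1) := by omega
          rw [e]; exact hget⟩
        have hnA : ¬ A L i (k + 1) := by
          intro hA
          have h1 : k + 1 < L.length := hA.1
          refine not_pair hred (t := L.length - 1 - (k + 1)) (i := i) (b := true)
            (by omega) hA.2 ?_
          have e : L.length - 1 - (k + 1) + 1 = m - (k + 1) := by omega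
          rw [e]
          exact hget
        show (sigma L hred i)⁻¹ ⟨k, by omega⟩ = ⟨k + 1, hk2⟩
        rw [Equiv.Perm.inv_def, Equiv.symm_apply_eq]
        have := sigma_B (v := (⟨k + 1, hk2⟩ : Fin (L.length + 1))) hred hnA hB
        rw [this]
        exact (Fin.ext (by simp)).symm
      · -- forward letter
        have hA : A L i k := ⟨by omega, by
          have e : L.length - 1 - k = m - (k + 1) := by omega
          rw [e]; exact hget⟩
        show sigma L hred i ⟨k, by omega⟩ = ⟨k + 1, hk2⟩
        rw [sigma_A (v := (⟨k, by omega⟩ : Fin (L.length + 1))) hred hA]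
  have hπ : FreeGroup.lift (sigma L hred) w = (L.map f).prod := by
    conv_lhs => rw [← FreeGroup.mk_toWord (x := w)]
    rw [FreeGroup.lift_mk]
  have hwm : (FreeGroup.lift (sigma L hred) w) ⟨0, by omega⟩ = ⟨m, by omega⟩ := by
    have h2 := walk m le_rfl (by omega)
    rw [Nat.sub_self] at h2
    rw [hπ]
    rw [show L.drop 0 = L from List.drop_zero] at h2
    exact h2
  intro hcontra
  rw [hcontra] at hwm
  have : (0 : ℕ) = m := by
    have := congrArg Fin.val hwm
    simpa using this
  omega

end ResFin
section Assembly

open Multiplicative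

private lemma chi_surj (n d : ℕ) (hn : 1 ≤ n) [NeZero d] :
    ∃ χ : FreeGroup (Fin n) →* Multiplicative (ZMod d), Function.Surjective χ := by
  refine ⟨FreeGroup.lift (fun _ => ofAdd (1 : ZMod d)), fun z => ?_⟩
  refine ⟨FreeGroup.of (⟨0, hn⟩ : Fin n) ^ (toAdd z).val, ?_⟩
  rw [map_pow, FreeGroup.lift_apply_of, ← ofAdd_nsmul, nsmul_eq_mul, mul_one,
    ZMod.natCast_rightInverse _, ofAdd_toAdd]

private lemma key_ineq {n n' : ℕ} (d : ℕ) [NeZero d] (hn : 1 ≤ n) (hn' : 1 ≤ n')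
    (ρ : FreeGroup (Fin n') →* FreeGroup (Fin n)) (hρ : Function.Surjective ρ)
    (S : Finset (FreeGroup (Fin n')))
    (hS : Subgroup.closure (S : Set (FreeGroup (Fin n'))) = ρ.ker) :
    d * (n' - 1) + 1 ≤ S.card + (d * (n - 1) + 1) := by
  classical
  obtain ⟨χ, hχ⟩ := chi_surj n d hn
  set χ' := χ.comp ρ with hχ'def
  have hχ' : Function.Surjective χ' := by
    rw [hχ'def, MonoidHom.coe_comp]
    exact hχ.comp hρ
  obtain ⟨hfin, hcard⟩ := FGCount.finite_and_card χ hn hχ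
  obtain ⟨hfin', hcard'⟩ := FGCount.finite_and_card χ' hn' hχ'
  haveI := hfin
  haveI := hfin'
  have hker_le : ρ.ker ≤ χ'.ker := by
    intro x hx
    rw [MonoidHom.mem_ker] at hx ⊢
    rw [hχ'def, MonoidHom.comp_apply, hx, map_one]
  have hmem : ∀ x : χ'.ker, ρ (x : FreeGroup (Fin n')) ∈ χ.ker := by
    intro x
    rw [MonoidHom.mem_ker]
    exact x.2
  set ρbar : χ'.ker →* χ.ker := (ρ.domRestrict χ'.ker).codRestrict χ.ker (fun x => hmem x)
    with hρbardef
  have hρbar_apply : ∀ x : χ'.ker, (ρbar x : FreeGroup (Fin n)) = ρ (x : FreeGroup (Fin n')) := by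
    intro x
    rw [hρbardef]
    rfl
  have hρbar : Function.Surjective ρbar := by
    intro y
    obtain ⟨u, hu⟩ := hρ (y : FreeGroup (Fin n))
    have hu' : u ∈ χ'.ker := by
      rw [MonoidHom.mem_ker]
      show χ (ρ u) = 1
      rw [hu]
      exact y.2
    exact ⟨⟨u, hu'⟩, Subtype.ext (by rw [hρbar_apply]; exact hu)⟩
  have hSker : ∀ x : S, (x : FreeGroup (Fin n')) ∈ χ'.ker := fun x =>
    hker_le (hS ▸ Subgroup.subset_closure (Finset.mem_coe.mpr x.2))
  set r : (χ'.ker →* Multiplicative (ZMod 2)) → (S → Multiplicative (ZMod 2)) :=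
    fun h x => h ⟨(x : FreeGroup (Fin n')), hSker x⟩ with hrdef
  have hclosure_mem : ∀ y, y ∈ Subgroup.closure (S : Set (FreeGroup (Fin n'))) → y ∈ χ'.ker :=
    fun y hy => hker_le (hS ▸ hy)
  have hfactor : ∀ h₁ h₂ : χ'.ker →* Multiplicative (ZMod 2), r h₁ = r h₂ →
      ∃ gq : χ.ker →* Multiplicative (ZMod 2), gq.comp ρbar = h₁ / h₂ := by
    intro h₁ h₂ hr
    have main : ∀ y (hy : y ∈ Subgroup.closure (S : Set (FreeGroup (Fin n')))),
        h₁ ⟨y, hclosure_mem y hy⟩ = h₂ ⟨y, hclosure_mem y hy⟩ := by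
      intro y hy
      induction hy using Subgroup.closure_induction with
      | mem x hx => exact congrFun hr ⟨x, Finset.mem_coe.mp hx⟩
      | one =>
        rw [show (⟨1, hclosure_mem 1 (one_mem _)⟩ : χ'.ker) = 1 from rfl, map_one, map_one]
      | mul x y hx hy px py =>
        rw [show (⟨x * y, hclosure_mem _ (mul_mem hx hy)⟩ : χ'.ker)
          = ⟨x, hclosure_mem x hx⟩ * ⟨y, hclosure_mem y hy⟩ from rfl, map_mul, map_mul, px, py]
      | inv x hx px =>
        rw [show (⟨x⁻¹, hclosure_mem _ (inv_mem hx)⟩ : χ'.ker)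
          = (⟨x, hclosure_mem x hx⟩)⁻¹ from rfl, map_inv, map_inv, px]
    have hcond : ρbar.ker ≤ (h₁ / h₂).ker := by
      intro x hx
      rw [MonoidHom.mem_ker] at hx ⊢
      have hx1 : ρ (x : FreeGroup (Fin n')) = 1 := by
        rw [← hρbar_apply, hx]
        rfl
      have hx2 : (x : FreeGroup (Fin n')) ∈ Subgroup.closure (S : Set (FreeGroup (Fin n'))) := by
        rw [hS, MonoidHom.mem_ker]
        exact hx1
      have := main _ hx2
      rw [Subtype.coe_eta] at this
      rw [MonoidHom.div_apply, this, div_self']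
    exact ⟨ρbar.liftOfRightInverse (Function.surjInv hρbar)
        (Function.rightInverse_surjInv hρbar) ⟨h₁ / h₂, hcond⟩,
      ρbar.liftOfRightInverse_comp (Function.surjInv hρbar)
        (Function.rightInverse_surjInv hρbar) ⟨h₁ / h₂, hcond⟩⟩
  haveI : Nonempty (χ'.ker →* Multiplicative (ZMod 2)) := ⟨1⟩
  set pick : (S → Multiplicative (ZMod 2)) → (χ'.ker →* Multiplicative (ZMod 2)) :=
    fun v => if hv : ∃ h, r h = v then hv.choose else 1 with hpickdef
  have hpick : ∀ h, r (pick (r h)) = r h := by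
    intro h
    have hv : ∃ h', r h' = r h := ⟨h, rfl⟩
    rw [hpickdef]
    simp only [dif_pos hv]
    exact hv.choose_spec
  set J : (χ'.ker →* Multiplicative (ZMod 2)) →
      (S → Multiplicative (ZMod 2)) × (χ.ker →* Multiplicative (ZMod 2)) :=
    fun h => (r h, (hfactor h (pick (r h)) (hpick h).symm).choose) with hJdef
  have hJ : Function.Injective J := by
    intro h₁ h₂ h12
    have e1 : r h₁ = r h₂ := congrArg Prod.fst h12
    have hg1 := (hfactor h₁ (pick (r h₁)) (hpick h₁).symm).choose_spec
    have hg2 := (hfactor h₂ (pick (r h₂)) (hpick h₂).symm).choose_spec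
    have e2 := congrArg Prod.snd h12
    simp only [hJdef] at e2
    have e3 : h₁ / pick (r h₁) = h₂ / pick (r h₂) := by
      rw [← hg1, ← hg2]
      exact congrArg (fun q : χ.ker →* Multiplicative (ZMod 2) => q.comp ρbar) e2
    rw [e1] at e3
    exact div_left_injective e3
  have hle := Nat.card_le_card_of_injective J hJ
  rw [Nat.card_prod, hcard, hcard', Nat.card_eq_fintype_card, Fintype.card_fun,
    Fintype.card_multiplicative, ZMod.card, Fintype.card_coe] at hle
  rw [← pow_add] at hle
  exact (Nat.pow_le_pow_iff_right one_lt_two).mp hle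

private lemma rank_le_of_surj {n n' : ℕ} (ρ : FreeGroup (Fin n') →* FreeGroup (Fin n))
    (hρ : Function.Surjective ρ) : n ≤ n' := by
  classical
  set T : (Fin n → Multiplicative (ZMod 2)) → (Fin n' → Multiplicative (ZMod 2)) :=
    fun b => FreeGroup.lift.symm ((FreeGroup.lift b).comp ρ) with hTdef
  have hT : Function.Injective T := by
    intro b₁ b₂ h
    have h2 : (FreeGroup.lift b₁).comp ρ = (FreeGroup.lift b₂).comp ρ :=
      FreeGroup.lift.symm.injective h
    have h3 := (MonoidHom.cancel_right hρ).mp h2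
    exact FreeGroup.lift.injective h3
  have hcard := Fintype.card_le_of_injective T hT
  rw [Fintype.card_fun, Fintype.card_fun, Fintype.card_multiplicative, ZMod.card,
    Fintype.card_fin, Fintype.card_fin] at hcard
  exact (Nat.pow_le_pow_iff_right one_lt_two).mp hcard

end Assembly

/-- If `φ : Γ →* F_g` (with `g ≥ 2`) is surjective with finitely generated kernel and
factors as `φ = ρ ∘ ψ` with `ψ : Γ →* F_{g'}` surjective (`g' ≥ 1`), then
`ρ : F_{g'} →* F_g` is an isomorphism and `g' = g`. -/
theorem freeGroup_factorization_isomorphism {Γ : Type*} [Group Γ]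
    (g g' : ℕ) (hg : 2 ≤ g) (hg' : 1 ≤ g')
    (φ : Γ →* FreeGroup (Fin g)) (hφsurj : Function.Surjective φ) (hker : φ.ker.FG)
    (ψ : Γ →* FreeGroup (Fin g')) (hψsurj : Function.Surjective ψ)
    (ρ : FreeGroup (Fin g') →* FreeGroup (Fin g)) (hfac : φ = ρ.comp ψ) :
    Function.Bijective ρ ∧ g' = g := by
  classical
  have hρsurj : Function.Surjective ρ := by
    have h := hφsurj
    rw [hfac, MonoidHom.coe_comp] at h
    exact h.of_comp
  have hkerρ : ρ.ker = Subgroup.map ψ φ.ker := by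
    ext x
    constructor
    · intro hx
      obtain ⟨γ, rfl⟩ := hψsurj x
      refine Subgroup.mem_map.mpr ⟨γ, ?_, rfl⟩
      show φ γ = 1
      rw [hfac, MonoidHom.comp_apply]
      exact hx
    · rintro ⟨γ, hγ, rfl⟩
      have hγ' : φ γ = 1 := hγ
      show ρ (ψ γ) = 1
      rw [← MonoidHom.comp_apply, ← hfac]
      exact hγ'
  obtain ⟨S₀, hS₀⟩ := hker
  set S : Finset (FreeGroup (Fin g')) := S₀.image ψ with hSdef
  have hS : Subgroup.closure (S : Set (FreeGroup (Fin g'))) = ρ.ker := by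
    rw [hkerρ, ← hS₀, MonoidHom.map_closure, hSdef, Finset.coe_image]
  set k := S.card with hkdef
  have hgle : g ≤ g' := rank_le_of_surj ρ hρsurj
  haveI : NeZero (k + 1) := ⟨Nat.succ_ne_zero k⟩
  have h2 := key_ineq (k + 1) (by omega : 1 ≤ g) hg' ρ hρsurj S hS
  have hgg : g' = g := by
    have ha : (k + 1) * (g' - 1) ≤ k + (k + 1) * (g - 1) := by omega
    rcases le_or_gt g' g with h | h
    · omega
    · exfalso
      have hb : (g - 1) + 1 ≤ g' - 1 := by omega
      have hc : (k + 1) * ((g - 1) + 1) ≤ (k + 1) * (g' - 1) := Nat.mul_le_mul_left _ hb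
      rw [Nat.mul_succ] at hc
      generalize (k + 1) * (g' - 1) = X at ha hc
      generalize (k + 1) * (g - 1) = Y at ha hc
      omega
  subst hgg
  have hinj : Function.Injective ρ := by
    rw [injective_iff_map_eq_one]
    intro w hw1
    by_contra hw
    obtain ⟨N, π, hπ⟩ := ResFin.exists_perm_hom w hw
    haveI : Finite (FreeGroup (Fin g') →* Equiv.Perm (Fin N)) :=
      Finite.of_equiv _ FreeGroup.lift
    have hprecomp : Function.Injective
        (fun f : FreeGroup (Fin g') →* Equiv.Perm (Fin N) => f.comp ρ) := by
      intro f₁ f₂ h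
      exact (MonoidHom.cancel_right hρsurj).mp h
    obtain ⟨π', hπ'⟩ := Finite.injective_iff_surjective.mp hprecomp π
    have hcontra : π w = 1 := by
      rw [← hπ', MonoidHom.comp_apply, hw1, map_one]
    exact hπ hcontra
  exact ⟨⟨hinj, hρsurj⟩, rfl⟩
end
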